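/- arXiv:2303.03265 — 7 statements merged into one kernel-verified Lean document; each statement's English description precedes it below -/
import Mathlib

section
/- Let n ∈ ℕ and let u, v ∈ [0,1] ∩ 2^{-n}ℤ with u ≠ v. Then there exist l ∈ ℕ and points a_1,...,a_l ∈ [min(u,v), max(u,v)] ∩ 2^{-n}ℤ such that: (i) a_1 = u and a_l = v; (ii) for each i < l there exists k ∈ {0,...,n} with a_i, a_{i+1} ∈ 2^{-k}ℤ and |a_i - a_{i+1}| = 2^{-k}; (iii) for every 0 < p ≤ 1 and 0 < α < 1, (∑_{i=1}^{l-1} |a_{i+1} - a_i|^{pα})^{1/p} < 2^{1/p} (1/(1 - 2^{-pα}))^{1/p} · |u - v|^α. -/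
/-!
Scaling by `2 ^ n` turns the endpoints into integers `a ≠ b`, and the sequence into a walk by
dyadic steps: steps of length `2 ^ j` between multiples of `2 ^ j`. Such a walk from `a < b` is
built by induction on `b - a`: an odd endpoint is left by a unit step, and when both endpoints are
even the walk from `a / 2` to `b / 2` is doubled. Every scale `2 ^ j ≤ b - a` is then used at most
twice, so `∑ |Δ| ^ s ≤ 2 ∑_{2 ^ j ≤ b - a} 2 ^ (j s) < 2 (b - a) ^ s / (1 - 2 ^ (-s))`;
take `s = p α` and the `1 / p`-th power.
-/

open Set

def DyadicStep (x y : ℤ) : Prop :=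
  ∃ j : ℕ, 2 ^ j ∣ x ∧ 2 ^ j ∣ y ∧ |x - y| = 2 ^ j

namespace DyadicStep

lemma symm {x y : ℤ} : DyadicStep x y → DyadicStep y x := by
  rintro ⟨j, hx, hy, h⟩
  exact ⟨j, hy, hx, by rwa [abs_sub_comm]⟩

lemma two_mul {x y : ℤ} : DyadicStep x y → DyadicStep (2 * x) (2 * y) := by
  rintro ⟨j, hx, hy, h⟩
  refine ⟨j + 1, ?_, ?_, ?_⟩
  · rw [pow_succ']; exact mul_dvd_mul_left 2 hx
  · rw [pow_succ']; exact mul_dvd_mul_left 2 hy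
  · rw [← mul_sub, abs_mul, h, pow_succ']; rfl

lemma add_one (x : ℤ) : DyadicStep x (x + 1) :=
  ⟨0, one_dvd _, one_dvd _, by simp⟩

end DyadicStep

structure IsDyadicChain (L : List ℤ) (a b : ℤ) : Prop where
  head_eq : L.head? = some a
  getLast_eq : L.getLast? = some b
  mem_uIcc : ∀ x ∈ L, x ∈ uIcc a b
  isChain : L.IsChain DyadicStep

namespace IsDyadicChain

variable {L : List ℤ} {a b : ℤ}

lemma pair (a : ℤ) : IsDyadicChain [a, a + 1] a (a + 1) where
  head_eq := rfl
  getLast_eq := rfl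
  mem_uIcc := by simp
  isChain := .cons_cons (.add_one a) (.singleton _)

lemma cons (h : IsDyadicChain L (a + 1) b) (hab : a < b) : IsDyadicChain (a :: L) a b := by
  cases L with
  | nil => exact absurd h.head_eq (by simp)
  | cons y t =>
    obtain rfl : y = a + 1 := by simpa using h.head_eq
    have hsub : uIcc (a + 1) b ⊆ uIcc a b :=
      uIcc_subset_uIcc_right (by rw [uIcc_of_lt hab]; constructor <;> omega)
    refine ⟨rfl, by simpa using h.getLast_eq, ?_, .cons_cons (.add_one a) h.isChain⟩
    intro x hx
    rcases List.mem_cons.1 hx with rfl | hx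
    · exact left_mem_uIcc
    · exact hsub (h.mem_uIcc x hx)

lemma concat (h : IsDyadicChain L a (b - 1)) (hab : a < b) :
    IsDyadicChain (L ++ [b]) a b := by
  have hsub : uIcc a (b - 1) ⊆ uIcc a b :=
    uIcc_subset_uIcc_left (by rw [uIcc_of_lt hab]; constructor <;> omega)
  refine ⟨by simp [List.head?_append, h.head_eq], by simp, ?_, ?_⟩
  · simp only [List.mem_append, List.mem_singleton]
    rintro x (hx | rfl)
    · exact hsub (h.mem_uIcc x hx)
    · exact right_mem_uIcc
  · refine List.isChain_append.2 ⟨h.isChain, .singleton b, ?_⟩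
    simp only [h.getLast_eq, Option.mem_def, Option.some.injEq, List.head?_cons]
    rintro _ rfl _ rfl
    simpa using DyadicStep.add_one (b - 1)

lemma map_two_mul (h : IsDyadicChain L a b) :
    IsDyadicChain (L.map (2 * ·)) (2 * a) (2 * b) where
  head_eq := by simp [h.head_eq]
  getLast_eq := by simp [h.getLast_eq]
  mem_uIcc := by
    simp only [List.mem_map, forall_exists_index, and_imp, forall_apply_eq_imp_iff₂]
    have hmono : Monotone (2 * · : ℤ → ℤ) := fun _ _ h => by dsimp; omega
    exact fun x hx => hmono.mapsTo_uIcc (h.mem_uIcc x hx)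
  isChain := (List.isChain_map _).2 (h.isChain.imp fun _ _ => DyadicStep.two_mul)

lemma reverse (h : IsDyadicChain L a b) : IsDyadicChain L.reverse b a where
  head_eq := by simp [h.getLast_eq]
  getLast_eq := by simp [h.head_eq]
  mem_uIcc x hx := uIcc_comm a b ▸ h.mem_uIcc x (List.mem_reverse.1 hx)
  isChain := List.isChain_reverse.2 (h.isChain.imp fun _ _ => DyadicStep.symm)

lemma length_pos (h : IsDyadicChain L a b) : 0 < L.length :=
  List.length_pos_iff.2 fun hL => by simpa [hL] using h.head_eq

lemma getD_zero (h : IsDyadicChain L a b) : L.getD 0 0 = a := by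
  rw [List.getD_eq_getElem?_getD, ← List.head?_eq_getElem?, h.head_eq, Option.getD_some]

lemma getD_length_sub_one (h : IsDyadicChain L a b) : L.getD (L.length - 1) 0 = b := by
  rw [List.getD_eq_getElem?_getD, ← List.getLast?_eq_getElem?, h.getLast_eq, Option.getD_some]

lemma getD_mem_uIcc (h : IsDyadicChain L a b) {i : ℕ} (hi : i < L.length) :
    L.getD i 0 ∈ uIcc a b := by
  rw [List.getD_eq_getElem?_getD, List.getElem?_eq_getElem hi, Option.getD_some]
  exact h.mem_uIcc _ (List.getElem_mem hi)

lemma exists_step_getD (h : IsDyadicChain L a b) {i : ℕ} (hi : i + 1 < L.length) :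
    ∃ j : ℕ, 2 ^ j ≤ |a - b| ∧ 2 ^ j ∣ L.getD i 0 ∧ 2 ^ j ∣ L.getD (i + 1) 0 ∧
      |L.getD i 0 - L.getD (i + 1) 0| = 2 ^ j := by
  have hstep : DyadicStep (L.getD i 0) (L.getD (i + 1) 0) := by
    simp only [List.getD_eq_getElem?_getD, List.getElem?_eq_getElem hi,
      List.getElem?_eq_getElem (Nat.lt_of_succ_lt hi), Option.getD_some]
    exact List.isChain_iff_getElem.1 h.isChain i hi
  obtain ⟨j, hx, hy, hj⟩ := hstep
  refine ⟨j, ?_, hx, hy, hj⟩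
  rw [← hj, abs_sub_comm a]
  exact abs_sub_le_of_uIcc_subset_uIcc
    (uIcc_subset_uIcc (h.getD_mem_uIcc hi) (h.getD_mem_uIcc (Nat.lt_of_succ_lt hi)))

end IsDyadicChain

noncomputable def chainSum (s : ℝ) : List ℤ → ℝ
  | [] => 0
  | [_] => 0
  | x :: y :: t => |(x : ℝ) - y| ^ s + chainSum s (y :: t)

section chainSum

variable (s : ℝ)

lemma chainSum_nonneg : ∀ L : List ℤ, 0 ≤ chainSum s L
  | [] | [_] => le_rfl
  | _ :: y :: t => add_nonneg (Real.rpow_nonneg (abs_nonneg _) _) (chainSum_nonneg (y :: t))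

lemma chainSum_cons {L : List ℤ} {y : ℤ} (hL : L.head? = some y) (x : ℤ) :
    chainSum s (x :: L) = |(x : ℝ) - y| ^ s + chainSum s L := by
  cases L with
  | nil => simp at hL
  | cons z t =>
    obtain rfl : z = y := by simpa using hL
    rfl

lemma chainSum_concat {L : List ℤ} {y : ℤ} (hL : L.getLast? = some y) (b : ℤ) :
    chainSum s (L ++ [b]) = chainSum s L + |(y : ℝ) - b| ^ s := by
  induction L with
  | nil => simp at hL
  | cons x t ih =>
    cases t with
    | nil =>
      obtain rfl : x = y := by simpa using hL
      simp [chainSum]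
    | cons z t =>
      rw [List.getLast?_cons_cons] at hL
      simp only [List.cons_append, chainSum] at ih ⊢
      rw [ih hL, add_assoc]

lemma chainSum_reverse : ∀ L : List ℤ, chainSum s L.reverse = chainSum s L
  | [] | [_] => rfl
  | x :: y :: t => by
    rw [List.reverse_cons, chainSum_concat s (by simp : (y :: t).reverse.getLast? = some y),
      chainSum_reverse (y :: t), chainSum, abs_sub_comm, add_comm]

lemma chainSum_map_mul (c : ℤ) : ∀ L : List ℤ,
    chainSum s (L.map (c * ·)) = |(c : ℝ)| ^ s * chainSum s L
  | [] | [_] => by simp [chainSum]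
  | x :: y :: t => by
    have ih := chainSum_map_mul c (y :: t)
    simp only [List.map_cons, chainSum] at ih ⊢
    push_cast
    rw [ih, ← mul_sub, abs_mul, Real.mul_rpow (abs_nonneg _) (abs_nonneg _), mul_add]

lemma chainSum_eq_sum : ∀ L : List ℤ,
    chainSum s L =
      ∑ i ∈ Finset.range (L.length - 1), |(L.getD (i + 1) 0 : ℝ) - L.getD i 0| ^ s
  | [] | [_] => by simp [chainSum]
  | x :: y :: t => by
    rw [chainSum, chainSum_eq_sum (y :: t), List.length_cons, List.length_cons,
      Nat.add_sub_cancel, Nat.add_sub_cancel, List.length_cons, Finset.sum_range_succ',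
      abs_sub_comm, add_comm]
    rfl

end chainSum

noncomputable def dyadicBound (s d : ℝ) : ℝ := 2 * ((2 * d) ^ s - 1) / (2 ^ s - 1)

/- For `d = 2 ^ J`, `dyadicBound s d = 2 ∑_{j ≤ J} 2 ^ (j s)`: every scale up to `d` is used at
most twice. An even endpoint saves one unit step, which is what lets the halving step of the
induction absorb the `- 2` of `two_rpow_mul_dyadicBound`. -/
noncomputable def chainBound (s : ℝ) (a b : ℤ) : ℝ :=
  dyadicBound s (b - a) - (if Even a then 1 else 0) - (if Even b then 1 else 0)

section bounds

variable {s : ℝ} (hs : 0 < s)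
include hs

lemma one_lt_two_rpow : 1 < (2 : ℝ) ^ s := Real.one_lt_rpow one_lt_two hs

lemma dyadicBound_mono {d e : ℝ} (hd : 0 ≤ d) (hde : d ≤ e) :
    dyadicBound s d ≤ dyadicBound s e := by
  have := one_lt_two_rpow hs
  unfold dyadicBound
  gcongr

lemma dyadicBound_one : dyadicBound s 1 = 2 := by
  have := one_lt_two_rpow hs
  unfold dyadicBound
  rw [mul_one, mul_div_assoc, div_self (by linarith), mul_one]

lemma two_rpow_mul_dyadicBound {d : ℝ} (hd : 0 ≤ d) :
    2 ^ s * dyadicBound s d = dyadicBound s (2 * d) - 2 := by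
  have := one_lt_two_rpow hs
  unfold dyadicBound
  have : (2 : ℝ) ^ s - 1 ≠ 0 := by linarith
  rw [Real.mul_rpow zero_le_two (by positivity : (0 : ℝ) ≤ 2 * d)]
  field_simp
  ring

lemma dyadicBound_lt {d : ℝ} (hd : 0 ≤ d) :
    dyadicBound s d < 2 / (1 - 2 ^ (-s)) * d ^ s := by
  have := one_lt_two_rpow hs
  have h : 1 - (2 : ℝ) ^ (-s) = (2 ^ s - 1) / 2 ^ s := by
    rw [Real.rpow_neg zero_le_two]; field_simp
  rw [h, dyadicBound, Real.mul_rpow zero_le_two hd]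
  field_simp
  gcongr
  linarith

lemma chainBound_add_one (a : ℤ) : chainBound s a (a + 1) = 1 := by
  rw [chainBound, Int.cast_add, Int.cast_one, add_sub_cancel_left, dyadicBound_one hs]
  by_cases ha : Even a
  · rw [if_pos ha, if_neg (by simpa [Int.even_add_one] using ha)]; norm_num
  · rw [if_neg ha, if_pos (Int.even_add_one.2 ha)]; norm_num

lemma one_add_chainBound_le {a b : ℤ} (ha : ¬Even a) (hab : a < b) :
    1 + chainBound s (a + 1) b ≤ chainBound s a b := by
  have hab' : (a : ℝ) + 1 ≤ b := by exact_mod_cast hab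
  have := dyadicBound_mono hs (d := b - (a + 1 : ℤ)) (e := b - a) (by push_cast; linarith)
    (by push_cast; linarith)
  rw [chainBound, chainBound, if_pos (Int.even_add_one.2 ha), if_neg ha]
  linarith

lemma chainBound_add_one_le {a b : ℤ} (hb : ¬Even b) (hab : a < b) :
    chainBound s a (b - 1) + 1 ≤ chainBound s a b := by
  have hab' : (a : ℝ) + 1 ≤ b := by exact_mod_cast hab
  have := dyadicBound_mono hs (d := (b - 1 : ℤ) - a) (e := b - a) (by push_cast; linarith)
    (by push_cast; linarith)
  rw [chainBound, chainBound, if_pos (Int.even_sub_one.2 hb), if_neg hb]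
  linarith

lemma two_rpow_mul_chainBound_le {a b : ℤ} (hab : a ≤ b) :
    2 ^ s * chainBound s a b ≤ chainBound s (2 * a) (2 * b) := by
  have h := two_rpow_mul_dyadicBound hs (d := b - a) (sub_nonneg.2 (by exact_mod_cast hab))
  have ha : (0 : ℝ) ≤ 2 ^ s * if Even a then 1 else 0 := by positivity
  have hb : (0 : ℝ) ≤ 2 ^ s * if Even b then 1 else 0 := by positivity
  rw [chainBound, chainBound, if_pos (even_two_mul a), if_pos (even_two_mul b), Int.cast_mul,
    Int.cast_mul, Int.cast_two, ← mul_sub, mul_sub, mul_sub, h]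
  linarith

lemma chainBound_lt {a b : ℤ} (hab : a ≤ b) :
    chainBound s a b < 2 / (1 - 2 ^ (-s)) * |(a : ℝ) - b| ^ s := by
  have hab' : (a : ℝ) ≤ b := by exact_mod_cast hab
  have ha : (0 : ℝ) ≤ if Even a then 1 else 0 := by positivity
  have hb : (0 : ℝ) ≤ if Even b then 1 else 0 := by positivity
  rw [abs_sub_comm, abs_of_nonneg (sub_nonneg.2 hab')]
  have := dyadicBound_lt hs (sub_nonneg.2 hab')
  rw [chainBound]
  linarith

end bounds

lemma abs_intCast_sub_rpow_of_abs_sub_eq_one {x y : ℤ} (h : |x - y| = 1) (s : ℝ) :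
    |(x : ℝ) - y| ^ s = 1 := by
  rw [← Int.cast_sub, ← Int.cast_abs, h, Int.cast_one, Real.one_rpow]

theorem exists_isDyadicChain_chainSum_le {a b : ℤ} (hab : a < b) :
    ∃ L, IsDyadicChain L a b ∧ ∀ s, 0 < s → chainSum s L ≤ chainBound s a b := by
  induction hd : (b - a).toNat using Nat.strong_induction_on generalizing a b with
  | _ d ih =>
  have hunit : ∀ x : ℤ, |x - (x + 1)| = 1 := fun x => by norm_num
  by_cases hb : b = a + 1
  · subst hb
    refine ⟨_, .pair a, fun s hs => ?_⟩
    rw [chainBound_add_one hs, chainSum_cons s rfl,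
      abs_intCast_sub_rpow_of_abs_sub_eq_one (hunit a)]
    exact (add_zero 1).le
  by_cases ha : Even a
  · by_cases hb' : Even b
    · obtain ⟨a, rfl⟩ := ha.two_dvd
      obtain ⟨b, rfl⟩ := hb'.two_dvd
      obtain ⟨L, hL, hsum⟩ := ih (b - a).toNat (by omega) (by omega : a < b) rfl
      refine ⟨L.map (2 * ·), hL.map_two_mul, fun s hs => ?_⟩
      rw [chainSum_map_mul, Int.cast_two, abs_two]
      exact (mul_le_mul_of_nonneg_left (hsum s hs) (by positivity)).trans
        (two_rpow_mul_chainBound_le hs (by omega))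
    · obtain ⟨L, hL, hsum⟩ := ih (b - 1 - a).toNat (by omega) (by omega : a < b - 1) rfl
      refine ⟨L ++ [b], hL.concat hab, fun s hs => ?_⟩
      rw [chainSum_concat s hL.getLast_eq, abs_intCast_sub_rpow_of_abs_sub_eq_one (by simp)]
      linarith [hsum s hs, chainBound_add_one_le hs hb' hab]
  · obtain ⟨L, hL, hsum⟩ := ih (b - (a + 1)).toNat (by omega) (by omega : a + 1 < b) rfl
    refine ⟨a :: L, hL.cons hab, fun s hs => ?_⟩
    rw [chainSum_cons s hL.head_eq, abs_intCast_sub_rpow_of_abs_sub_eq_one (hunit a)]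
    linarith [hsum s hs, one_add_chainBound_le hs ha hab]

theorem exists_isDyadicChain_chainSum_lt {a b : ℤ} (hab : a ≠ b) :
    ∃ L, IsDyadicChain L a b ∧
      ∀ s, 0 < s → chainSum s L < 2 / (1 - 2 ^ (-s)) * |(a : ℝ) - b| ^ s := by
  rcases hab.lt_or_gt with h | h
  · obtain ⟨L, hL, hsum⟩ := exists_isDyadicChain_chainSum_le h
    exact ⟨L, hL, fun s hs => (hsum s hs).trans_lt (chainBound_lt hs h.le)⟩
  · obtain ⟨L, hL, hsum⟩ := exists_isDyadicChain_chainSum_le h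
    refine ⟨L.reverse, hL.reverse, fun s hs => ?_⟩
    rw [chainSum_reverse, abs_sub_comm]
    exact (hsum s hs).trans_lt (chainBound_lt hs h.le)

lemma rpow_mul_chainSum_eq_sum {c : ℝ} (hc : 0 ≤ c) (s : ℝ) (L : List ℤ) :
    c ^ s * chainSum s L =
      ∑ i ∈ Finset.range (L.length - 1), |c * L.getD (i + 1) 0 - c * L.getD i 0| ^ s := by
  rw [chainSum_eq_sum, Finset.mul_sum]
  refine Finset.sum_congr rfl fun i _ => ?_
  rw [← mul_sub, abs_mul, abs_of_nonneg hc, Real.mul_rpow hc (abs_nonneg _)]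

lemma two_zpow_neg_mul_two_pow {j n : ℕ} (h : j ≤ n) :
    (2 : ℝ) ^ (-(n : ℤ)) * 2 ^ j = 2 ^ (-((n - j : ℕ) : ℤ)) := by
  rw [← zpow_natCast, ← zpow_add₀ two_ne_zero, Nat.cast_sub h]
  ring_nf

lemma exists_two_zpow_neg_mul_eq_of_two_pow_dvd {j n : ℕ} (h : j ≤ n) {x : ℤ}
    (hx : 2 ^ j ∣ x) :
    ∃ m : ℤ, (2 : ℝ) ^ (-(n : ℤ)) * x = 2 ^ (-((n - j : ℕ) : ℤ)) * m := by
  obtain ⟨m, rfl⟩ := hx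
  exact ⟨m, by push_cast; rw [← mul_assoc, two_zpow_neg_mul_two_pow h]⟩

lemma mem_Icc_of_two_zpow_neg_mul_mem_Icc {n : ℕ} {z : ℤ}
    (h : (2 : ℝ) ^ (-(n : ℤ)) * z ∈ Icc (0 : ℝ) 1) : z ∈ Icc 0 (2 ^ n) := by
  rw [zpow_neg, zpow_natCast, inv_mul_eq_div, mem_Icc, div_le_one (by positivity),
    le_div_iff₀ (by positivity), zero_mul] at h
  exact ⟨by exact_mod_cast h.1, by exact_mod_cast h.2⟩

lemma rpow_one_div_lt_of_lt_mul_rpow {S K D p α : ℝ} (hp : 0 < p) (hS : 0 ≤ S) (hK : 0 ≤ K)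
    (hD : 0 ≤ D) (h : S < 2 * K * D ^ (p * α)) :
    S ^ (1 / p) < 2 ^ (1 / p) * K ^ (1 / p) * D ^ α := by
  calc S ^ (1 / p) < (2 * K * D ^ (p * α)) ^ (1 / p) := Real.rpow_lt_rpow hS h (by positivity)
    _ = 2 ^ (1 / p) * K ^ (1 / p) * D ^ α := by
      rw [Real.mul_rpow (by positivity) (by positivity), Real.mul_rpow zero_le_two hK,
        ← Real.rpow_mul hD, show p * α * (1 / p) = α by field_simp]

lemma rpow_sum_lt_of_chainSum_lt {L : List ℤ} {x y : ℤ} {c p α : ℝ} (hc : 0 < c)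
    (hp : 0 < p) (hα : 0 < α)
    (hL : chainSum (p * α) L < 2 / (1 - 2 ^ (-(p * α))) * |(x : ℝ) - y| ^ (p * α)) :
    (∑ i ∈ Finset.range (L.length - 1),
        |c * L.getD (i + 1) 0 - c * L.getD i 0| ^ (p * α)) ^ (1 / p)
      < 2 ^ (1 / p) * (1 / (1 - (2 : ℝ) ^ (-(p * α)))) ^ (1 / p) * |c * x - c * y| ^ α := by
  have hK : 0 ≤ 1 / (1 - (2 : ℝ) ^ (-(p * α))) := one_div_nonneg.2 <| sub_nonneg.2 <|
    Real.rpow_le_one_of_one_le_of_nonpos one_le_two (neg_nonpos.2 (mul_pos hp hα).le)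
  rw [← rpow_mul_chainSum_eq_sum hc.le]
  refine rpow_one_div_lt_of_lt_mul_rpow hp
    (mul_nonneg (by positivity) (chainSum_nonneg _ L)) hK (abs_nonneg _) ?_
  calc _ < c ^ (p * α) * (2 / (1 - 2 ^ (-(p * α))) * |(x : ℝ) - y| ^ (p * α)) :=
        mul_lt_mul_of_pos_left hL (by positivity)
    _ = _ := by
      rw [← mul_sub, abs_mul, abs_of_pos hc, Real.mul_rpow hc.le (abs_nonneg _)]
      ring

/-- Dyadic chain decomposition of a segment with controlled α-Hölder total length. -/
theorem stmt4 (n : ℕ) (u v : ℝ)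
    (hu : u ∈ Set.Icc (0 : ℝ) 1) (hv : v ∈ Set.Icc (0 : ℝ) 1)
    (hud : ∃ m : ℤ, u = 2 ^ (-(n : ℤ)) * m) (hvd : ∃ m : ℤ, v = 2 ^ (-(n : ℤ)) * m)
    (huv : u ≠ v) :
    ∃ (l : ℕ) (a : ℕ → ℝ), 1 ≤ l ∧
      (∀ i < l, a i ∈ Set.Icc (min u v) (max u v) ∧ ∃ m : ℤ, a i = 2 ^ (-(n : ℤ)) * m) ∧
      a 0 = u ∧ a (l - 1) = v ∧
      (∀ i, i + 1 < l → ∃ k ≤ n, (∃ m : ℤ, a i = 2 ^ (-(k : ℤ)) * m) ∧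
        (∃ m : ℤ, a (i + 1) = 2 ^ (-(k : ℤ)) * m) ∧ |a i - a (i + 1)| = 2 ^ (-(k : ℤ))) ∧
      ∀ p α : ℝ, 0 < p → p ≤ 1 → 0 < α → α < 1 →
        (∑ i ∈ Finset.range (l - 1), |a (i + 1) - a i| ^ (p * α)) ^ (1 / p)
          < 2 ^ ((1 : ℝ) / p) * (1 / (1 - (2 : ℝ) ^ (-(p * α)))) ^ (1 / p) * |u - v| ^ α := by
  obtain ⟨x, rfl⟩ := hud
  obtain ⟨y, rfl⟩ := hvd
  have hc : (0 : ℝ) < 2 ^ (-(n : ℤ)) := by positivity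
  have hx := mem_Icc_of_two_zpow_neg_mul_mem_Icc hu
  have hy := mem_Icc_of_two_zpow_neg_mul_mem_Icc hv
  have hxy : |x - y| ≤ 2 ^ n :=
    abs_sub_le_iff.2 ⟨by linarith [hx.2, hy.1], by linarith [hx.1, hy.2]⟩
  obtain ⟨L, hL, hsum⟩ :=
    exists_isDyadicChain_chainSum_lt (a := x) (b := y) (by rintro rfl; exact huv rfl)
  refine ⟨L.length, fun i => 2 ^ (-(n : ℤ)) * L.getD i 0, hL.length_pos,
    fun i hi => ⟨?_, _, rfl⟩, by simp only [hL.getD_zero],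
    by simp only [hL.getD_length_sub_one], fun i hi => ?_,
    fun p α hp _ hα _ => rpow_sum_lt_of_chainSum_lt hc hp hα (hsum _ (mul_pos hp hα))⟩
  · have hmono : Monotone fun z : ℤ => (2 : ℝ) ^ (-(n : ℤ)) * z :=
      fun _ _ h => mul_le_mul_of_nonneg_left (Int.cast_mono h) hc.le
    exact hmono.mapsTo_uIcc (hL.getD_mem_uIcc hi)
  · obtain ⟨j, hjxy, hxj, hyj, hj⟩ := hL.exists_step_getD hi
    have hjn : j ≤ n := (pow_le_pow_iff_right₀ one_lt_two).1 (hjxy.trans hxy)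
    refine ⟨n - j, Nat.sub_le n j, exists_two_zpow_neg_mul_eq_of_two_pow_dvd hjn hxj,
      exists_two_zpow_neg_mul_eq_of_two_pow_dvd hjn hyj, ?_⟩
    rw [← mul_sub, abs_mul, abs_of_pos hc, ← Int.cast_sub, ← Int.cast_abs, hj, Int.cast_pow,
      Int.cast_two, two_zpow_neg_mul_two_pow hjn]
end

section
/- Let d ≥ 1 and equip ℝ^d with the ℓ¹ norm, and let 0 < p ≤ 1. Let V = {0,1}^d with base point 0. In the Lipschitz free p-space F_p(V, |·|₁), consider the element m = ∑_{u ∈ {0,1}^{d-1}} 2^{-(d-1)} (δ(u,1) - δ(u,0)), where (u,1), (u,0) ∈ {0,1}^d append the last coordinate. Then ‖m‖_p ≥ 2^{(d-1)(1/p - 1)} = C(p, 2^{d-1}). -/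
/-- The ℓ¹ distance on ℝ^d. -/
noncomputable def l1dist {d : ℕ} (x y : Fin d → ℝ) : ℝ := ∑ i, |x i - y i|

/-- A vertex of the cube {0,1}^d viewed as a point of ℝ^d. -/
def vert {d : ℕ} (v : Fin d → Bool) : Fin d → ℝ := fun i => if v i then 1 else 0

/-- An elementary molecule (δ(x) - δ(y))/|x - y|₁ over the vertex set {0,1}^d,
modelled as a function on the vertices (δ(z) being modelled as χ_z - χ_basepoint,
so that the basepoint contributions cancel). -/
noncomputable def mol {d : ℕ} (x y : Fin d → Bool) : (Fin d → Bool) → ℝ :=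
  fun w => ((if w = x then (1 : ℝ) else 0) - (if w = y then 1 else 0)) /
    l1dist (vert x) (vert y)

/-- δ(v) in the Lipschitz free p-space over ({0,1}^d, ℓ¹) with basepoint 0,
modelled as χ_v - χ_0. -/
noncomputable def deltaV {d : ℕ} (v : Fin d → Bool) : (Fin d → Bool) → ℝ :=
  fun w => (if w = v then (1 : ℝ) else 0) - (if w = (fun _ => false) then 1 else 0)

/-- The set of values (∑ |aᵢ|^p)^{1/p} over all molecular decompositions of m;
the free p-space norm of m is its infimum. -/
noncomputable def pNormSet (p : ℝ) {d : ℕ} (m : (Fin d → Bool) → ℝ) : Set ℝ :=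
  {c | ∃ (n : ℕ) (a : Fin n → ℝ) (x y : Fin n → (Fin d → Bool)),
    (∀ i, x i ≠ y i) ∧ m = (∑ i, a i • mol (x i) (y i)) ∧
    c = (∑ i, |a i| ^ p) ^ (1 / p)}

/-- Multilinear interpolation coefficient x^{(v)} = ∏ᵢ xᵢ^{(vᵢ)}. -/
noncomputable def coeffR {d : ℕ} (x : Fin d → ℝ) (v : Fin d → Bool) : ℝ :=
  ∏ i, (if v i then x i else 1 - x i)

/-- The canonical coordinatewise affine retraction r(x) = ∑_v x^{(v)} δ(v). -/
noncomputable def rMap {d : ℕ} (x : Fin d → ℝ) : (Fin d → Bool) → ℝ :=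
  ∑ v : Fin d → Bool, coeffR x v • deltaV v

/-!
Testing `m` against the indicator of a single vertex `w` (a 1-Lipschitz functional for the
ℓ¹ metric, since distinct vertices are at distance at least 1) shows that the molecules of any
decomposition `m = ∑ aᵢ μᵢ` touching `w` carry total coefficient mass at least `|m w| = 2⁻ᵈ`,
hence, by subadditivity of `t ↦ t ^ p` for `p ≤ 1`, `p`-mass at least `2^{-dp}`. Summing over
the `2^{d+1}` vertices counts each molecule at most twice, so `∑ |aᵢ| ^ p ≥ 2^d · 2^{-dp}`.
-/

theorem Real.rpow_sum_le_sum_rpow {ι : Type*} (s : Finset ι) {f : ι → ℝ}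
    (hf : ∀ i ∈ s, 0 ≤ f i) {p : ℝ} (hp0 : 0 < p) (hp1 : p ≤ 1) :
    (∑ i ∈ s, f i) ^ p ≤ ∑ i ∈ s, f i ^ p :=
  Finset.le_sum_of_subadditive_on_pred (· ^ p) (0 ≤ ·) (Real.zero_rpow hp0.ne').le
    (fun _ _ hx hy => Real.rpow_add_le_add_rpow hx hy hp0.le hp1) (fun _ _ => add_nonneg) f hf

theorem Finset.sum_sum_ite_or_eq_two_mul {V ι : Type*} [Fintype V] [DecidableEq V]
    (s : Finset ι) {x y : ι → V} (hxy : ∀ i ∈ s, x i ≠ y i) (c : ι → ℝ) :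
    ∑ w, ∑ i ∈ s, (if w = x i ∨ w = y i then c i else 0) = 2 * ∑ i ∈ s, c i := by
  rw [Finset.sum_comm, Finset.mul_sum]
  refine Finset.sum_congr rfl fun i hi => ?_
  have hsplit : ∀ w, (if w = x i ∨ w = y i then c i else 0)
      = (if w = x i then c i else 0) + (if w = y i then c i else 0) := by
    intro w
    by_cases hx : w = x i <;> by_cases hy : w = y i
    · exact absurd (hx.symm.trans hy) (hxy i hi)
    all_goals simp [hx, hy, hxy i hi, (hxy i hi).symm]
  simp only [hsplit, Finset.sum_add_distrib, Finset.sum_ite_eq', Finset.mem_univ, if_true]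
  ring

section Molecules

variable {d : ℕ}

theorem one_le_l1dist_vert {x y : Fin d → Bool} (h : x ≠ y) :
    1 ≤ l1dist (vert x) (vert y) := by
  obtain ⟨i, hi⟩ := Function.ne_iff.mp h
  have hcoord : |vert x i - vert y i| = 1 := by
    unfold vert
    cases hx : x i <;> cases hy : y i <;> simp_all
  exact hcoord ▸ Finset.single_le_sum (f := fun j => |vert x j - vert y j|)
    (fun j _ => abs_nonneg _) (Finset.mem_univ i)

theorem abs_mol_apply_le {x y : Fin d → Bool} (h : x ≠ y) (w : Fin d → Bool) :
    |mol x y w| ≤ if w = x ∨ w = y then 1 else 0 := by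
  have hdist := one_le_l1dist_vert h
  have hdist_pos : 0 < l1dist (vert x) (vert y) := one_pos.trans_le hdist
  unfold mol
  rw [abs_div, abs_of_pos hdist_pos, div_le_iff₀ hdist_pos]
  by_cases hx : w = x <;> by_cases hy : w = y
  · exact absurd (hx.symm.trans hy) h
  all_goals simp [hx, hy, h, h.symm, hdist]

theorem rpow_abs_apply_le_sum_touching {p : ℝ} (hp0 : 0 < p) (hp1 : p ≤ 1) {n : ℕ}
    (a : Fin n → ℝ) {x y : Fin n → Fin d → Bool} (hxy : ∀ i, x i ≠ y i) (w : Fin d → Bool) :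
    |(∑ i, a i • mol (x i) (y i)) w| ^ p
      ≤ ∑ i, if w = x i ∨ w = y i then |a i| ^ p else 0 := by
  have hmass : |(∑ i, a i • mol (x i) (y i)) w|
      ≤ ∑ i, if w = x i ∨ w = y i then |a i| else 0 := by
    rw [Finset.sum_apply]
    refine (Finset.abs_sum_le_sum_abs _ _).trans (Finset.sum_le_sum fun i _ => ?_)
    rw [Pi.smul_apply, smul_eq_mul, abs_mul]
    calc |a i| * |mol (x i) (y i) w|
        ≤ |a i| * (if w = x i ∨ w = y i then 1 else 0) :=
          mul_le_mul_of_nonneg_left (abs_mol_apply_le (hxy i) w) (abs_nonneg _)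
      _ = if w = x i ∨ w = y i then |a i| else 0 := by split_ifs <;> simp
  calc |(∑ i, a i • mol (x i) (y i)) w| ^ p
      ≤ (∑ i, if w = x i ∨ w = y i then |a i| else 0) ^ p :=
        Real.rpow_le_rpow (abs_nonneg _) hmass hp0.le
    _ ≤ ∑ i, (if w = x i ∨ w = y i then |a i| else 0) ^ p :=
        Real.rpow_sum_le_sum_rpow _ (fun i _ => by split_ifs <;> simp) hp0 hp1
    _ = ∑ i, if w = x i ∨ w = y i then |a i| ^ p else 0 := by
        simp only [apply_ite (· ^ p), Real.zero_rpow hp0.ne']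

theorem rpow_mul_le_of_mem_pNormSet {p : ℝ} (hp0 : 0 < p) (hp1 : p ≤ 1)
    {m : (Fin (d + 1) → Bool) → ℝ} {r : ℝ} (hr : 0 ≤ r) (hm : ∀ w, r ≤ |m w|) {c : ℝ}
    (hc : c ∈ pNormSet p m) :
    ((2 : ℝ) ^ d) ^ (1 / p) * r ≤ c := by
  obtain ⟨n, a, x, y, hxy, rfl, rfl⟩ := hc
  have hcount : (2 : ℝ) ^ (d + 1) * r ^ p ≤ 2 * ∑ i, |a i| ^ p :=
    calc (2 : ℝ) ^ (d + 1) * r ^ p = ∑ _w : Fin (d + 1) → Bool, r ^ p := by simp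
      _ ≤ ∑ w, ∑ i, if w = x i ∨ w = y i then |a i| ^ p else 0 :=
        Finset.sum_le_sum fun w _ => (Real.rpow_le_rpow hr (hm w) hp0.le).trans
          (rpow_abs_apply_le_sum_touching hp0 hp1 a hxy w)
      _ = 2 * ∑ i, |a i| ^ p :=
        Finset.sum_sum_ite_or_eq_two_mul _ (fun i _ => hxy i) _
  have hmass : (2 : ℝ) ^ d * r ^ p ≤ ∑ i, |a i| ^ p := by
    rw [pow_succ] at hcount
    linarith
  calc ((2 : ℝ) ^ d) ^ (1 / p) * r = ((2 : ℝ) ^ d * r ^ p) ^ (1 / p) := by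
        rw [Real.mul_rpow (by positivity) (by positivity), one_div,
          Real.rpow_rpow_inv hr hp0.ne']
    _ ≤ (∑ i, |a i| ^ p) ^ (1 / p) := Real.rpow_le_rpow (by positivity) hmass (by positivity)

theorem pNormSet_nonempty {ι : Type*} [Fintype ι] (p : ℝ) (a : ι → ℝ)
    {x y : ι → Fin d → Bool} (hxy : ∀ i, x i ≠ y i) :
    (pNormSet p (∑ i, a i • mol (x i) (y i))).Nonempty := by
  let e := (Fintype.equivFin ι).symm
  exact ⟨_, Fintype.card ι, a ∘ e, x ∘ e, y ∘ e, fun i => hxy (e i),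
    (Equiv.sum_comp e fun i => a i • mol (x i) (y i)).symm, rfl⟩

end Molecules

section VerticalEdges

variable {d : ℕ}

theorem mol_snoc_true_snoc_false (u : Fin d → Bool) :
    mol (Fin.snoc u true) (Fin.snoc u false)
      = deltaV (Fin.snoc u true) - deltaV (Fin.snoc u false) := by
  have hdist : l1dist (vert (Fin.snoc u true)) (vert (Fin.snoc u false)) = 1 := by
    simp [l1dist, vert, Fin.sum_univ_castSucc]
  funext w
  simp only [mol, deltaV, Pi.sub_apply, hdist, div_one]
  ring

theorem sum_ite_eq_snoc (w : Fin (d + 1) → Bool) (b : Bool) :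
    (∑ u : Fin d → Bool, if w = Fin.snoc u b then (1 : ℝ) else 0)
      = if w (Fin.last d) = b then 1 else 0 := by
  have hiff : ∀ u : Fin d → Bool, w = Fin.snoc u b ↔ Fin.init w = u ∧ w (Fin.last d) = b := by
    intro u
    conv_lhs => rw [← Fin.snoc_init_self w]
    exact Fin.snoc_inj
  simp only [hiff, ite_and, Finset.sum_ite_eq, Finset.mem_univ, if_true]

theorem abs_sum_smul_sub_deltaV_snoc_apply (w : Fin (d + 1) → Bool) :
    |(∑ u : Fin d → Bool,
      ((2 : ℝ) ^ (d : ℝ))⁻¹ • (deltaV (Fin.snoc u true) - deltaV (Fin.snoc u false))) w|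
      = ((2 : ℝ) ^ (d : ℝ))⁻¹ := by
  simp only [Finset.sum_apply, Pi.smul_apply, Pi.sub_apply, deltaV, smul_eq_mul,
    sub_sub_sub_cancel_right, ← Finset.mul_sum, Finset.sum_sub_distrib, sum_ite_eq_snoc]
  cases w (Fin.last d) <;> simp

end VerticalEdges

/-- Lower bound C(p,2^{d}) on the free p-norm of ∑_u 2^{-d}(δ(u,1)-δ(u,0)) in
F_p({0,1}^{d+1}, ℓ¹): the dimension here is d+1, so C(p, 2^{(d+1)-1}) = (2^d)^{1/p-1}. -/
theorem stmt14 (d : ℕ) (p : ℝ) (hp0 : 0 < p) (hp1 : p ≤ 1) :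
    ((2 : ℝ) ^ (d : ℝ)) ^ (1 / p - 1) ≤
      sInf (pNormSet p (∑ u : Fin d → Bool,
        ((2 : ℝ) ^ (d : ℝ))⁻¹ • (deltaV (Fin.snoc u true) - deltaV (Fin.snoc u false)))) := by
  have hnonempty := pNormSet_nonempty p (fun _ => ((2 : ℝ) ^ (d : ℝ))⁻¹)
    (x := fun u : Fin d → Bool => Fin.snoc u true) (y := fun u => Fin.snoc u false)
    fun u h => by simpa using congrFun h (Fin.last d)
  simp only [mol_snoc_true_snoc_false] at hnonempty
  refine le_csInf hnonempty fun c hc => ?_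
  calc ((2 : ℝ) ^ (d : ℝ)) ^ (1 / p - 1) = ((2 : ℝ) ^ d) ^ (1 / p) * ((2 : ℝ) ^ (d : ℝ))⁻¹ := by
        rw [Real.rpow_sub (by positivity), Real.rpow_one, Real.rpow_natCast, div_eq_mul_inv]
    _ ≤ c := rpow_mul_le_of_mem_pNormSet hp0 hp1 (by positivity)
        (fun w => (abs_sum_smul_sub_deltaV_snoc_apply w).ge) hc
end

section
/- Let d ≥ 1 and equip ℝ^d with the ℓ¹ norm; let 0 < p ≤ 1. Let V = {0,1}^d with base point 0 and let F_p(V) be the Lipschitz free p-space. Define r(x) = ∑_{v ∈ {0,1}^d} x^{(v)} δ(v) for x ∈ [0,1]^d, where x^{(v)} = ∏_i x_i^{(v_i)}, t^{(1)}=t, t^{(0)}=1-t. If x, y ∈ [0,1]^d agree in all coordinates except possibly the d-th, then ‖r(x) - r(y)‖_p ≤ 2^{(d-1)(1/p-1)} |x_d - y_d|. -/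
lemma l1dist_snoc {d : ℕ} (u : Fin d → Bool) :
    l1dist (vert (Fin.snoc u true)) (vert (Fin.snoc u false)) = 1 := by
  unfold l1dist vert
  rw [Fin.sum_univ_castSucc]
  simp [Fin.snoc_castSucc, Fin.snoc_last]

lemma mol_snoc {d : ℕ} (u : Fin d → Bool) :
    mol (Fin.snoc u true) (Fin.snoc u false)
      = deltaV (Fin.snoc u true) - deltaV (Fin.snoc u false) := by
  funext w
  simp only [mol, deltaV, l1dist_snoc u, div_one, Pi.sub_apply]
  ring

lemma coeffR_snoc {d : ℕ} (z : Fin (d+1) → ℝ) (u : Fin d → Bool) (b : Bool) :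
    coeffR z (Fin.snoc u b)
      = (∏ i : Fin d, (if u i then z i.castSucc else 1 - z i.castSucc)) *
        (if b then z (Fin.last d) else 1 - z (Fin.last d)) := by
  unfold coeffR
  rw [Fin.prod_univ_castSucc]
  simp [Fin.snoc_castSucc, Fin.snoc_last]

lemma sum_fun_succ {d : ℕ} {M : Type*} [AddCommMonoid M] (f : (Fin (d+1) → Bool) → M) :
    ∑ v : Fin (d+1) → Bool, f v
      = ∑ u : Fin d → Bool, (f (Fin.snoc u true) + f (Fin.snoc u false)) := by
  rw [← (Fin.snocEquiv (fun _ => Bool)).sum_comp f, Fintype.sum_prod_type,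
    Fintype.sum_bool, ← Finset.sum_add_distrib]
  rfl

/-- Single-coordinate estimate: if x, y ∈ [0,1]^{d+1} agree except possibly in the
last coordinate, then ‖r(x) - r(y)‖_p ≤ C(p, 2^d) |x_last - y_last|. -/
theorem stmt15 (d : ℕ) (p : ℝ) (hp0 : 0 < p) (hp1 : p ≤ 1)
    (x y : Fin (d + 1) → ℝ)
    (hx : ∀ i, x i ∈ Set.Icc (0 : ℝ) 1) (hy : ∀ i, y i ∈ Set.Icc (0 : ℝ) 1)
    (hxy : ∀ i, i ≠ Fin.last d → x i = y i) :
    sInf (pNormSet p (rMap x - rMap y)) ≤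
      ((2 : ℝ) ^ (d : ℝ)) ^ (1 / p - 1) * |x (Fin.last d) - y (Fin.last d)| := by
  set t := x (Fin.last d) - y (Fin.last d) with ht
  set c : (Fin d → Bool) → ℝ :=
    fun u => ∏ i : Fin d, (if u i then x i.castSucc else 1 - x i.castSucc) with hc
  have hc_nonneg : ∀ u, 0 ≤ c u := by
    intro u
    refine Finset.prod_nonneg fun i _ => ?_
    rcases hx i.castSucc with ⟨h0, h1⟩
    split <;> linarith
  have hc_sum : ∑ u : Fin d → Bool, c u = 1 := by
    have h := Finset.prod_univ_sum (fun _ : Fin d => (Finset.univ : Finset Bool))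
      (fun i b => if b then x i.castSucc else 1 - x i.castSucc)
    rw [Fintype.piFinset_univ] at h
    rw [hc, ← h]
    simp
  have hxyc : ∀ i : Fin d, x i.castSucc = y i.castSucc :=
    fun i => hxy _ (Fin.castSucc_lt_last i).ne
  have hprod : ∀ u : Fin d → Bool,
      (∏ i : Fin d, (if u i then y i.castSucc else 1 - y i.castSucc)) = c u := by
    intro u
    rw [hc]
    exact Finset.prod_congr rfl fun i _ => by rw [hxyc i]
  have key : rMap x - rMap y
      = ∑ u : Fin d → Bool,
          (t * c u) • (deltaV (Fin.snoc u true) - deltaV (Fin.snoc u false)) := by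
    have h1 : rMap x - rMap y
        = ∑ v : Fin (d+1) → Bool, (coeffR x v - coeffR y v) • deltaV v := by
      unfold rMap
      rw [← Finset.sum_sub_distrib]
      exact Finset.sum_congr rfl fun v _ => (sub_smul _ _ _).symm
    rw [h1, sum_fun_succ (fun v => (coeffR x v - coeffR y v) • deltaV v)]
    refine Finset.sum_congr rfl fun u _ => ?_
    have e1 : coeffR x (Fin.snoc u true) - coeffR y (Fin.snoc u true) = t * c u := by
      rw [coeffR_snoc, coeffR_snoc, hprod u]
      simp only [if_pos]
      ring
    have e2 : coeffR x (Fin.snoc u false) - coeffR y (Fin.snoc u false) = -(t * c u) := by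
      rw [coeffR_snoc, coeffR_snoc, hprod u]
      simp only [Bool.false_eq_true, if_neg, if_false]
      ring
    rw [e1, e2, neg_smul, ← sub_eq_add_neg, ← smul_sub]
  set n := 2 ^ d with hn
  have hcard : Fintype.card (Fin d → Bool) = n := by simp [hn]
  let e : (Fin d → Bool) ≃ Fin n := Fintype.equivFinOfCardEq hcard
  have hmem : (∑ u : Fin d → Bool, |t * c u| ^ p) ^ (1/p)
      ∈ pNormSet p (rMap x - rMap y) := by
    refine ⟨n, fun i => t * c (e.symm i), fun i => Fin.snoc (e.symm i) true,
      fun i => Fin.snoc (e.symm i) false, ?_, ?_, ?_⟩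
    · intro i h
      have := congrFun h (Fin.last d)
      simp [Fin.snoc_last] at this
    · rw [key]
      simp only [mol_snoc]
      exact (Equiv.sum_comp e.symm
        (fun u => (t * c u) • (deltaV (Fin.snoc u true) - deltaV (Fin.snoc u false)))).symm
    · rw [← Equiv.sum_comp e.symm (fun u => |t * c u| ^ p)]
  have hbdd : BddBelow (pNormSet p (rMap x - rMap y)) := by
    refine ⟨0, fun r hr => ?_⟩
    obtain ⟨m, a, X, Y, -, -, rfl⟩ := hr
    exact Real.rpow_nonneg
      (Finset.sum_nonneg fun i _ => Real.rpow_nonneg (abs_nonneg _) p) _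
  refine (csInf_le hbdd hmem).trans ?_
  set S := ∑ u : Fin d → Bool, c u ^ p with hS
  have hS_nonneg : 0 ≤ S :=
    Finset.sum_nonneg fun u _ => Real.rpow_nonneg (hc_nonneg u) p
  have hsum : ∑ u : Fin d → Bool, |t * c u| ^ p = |t| ^ p * S := by
    rw [hS, Finset.mul_sum]
    refine Finset.sum_congr rfl fun u _ => ?_
    rw [abs_mul, abs_of_nonneg (hc_nonneg u), Real.mul_rpow (abs_nonneg t) (hc_nonneg u)]
  set N : ℝ := (2:ℝ) ^ d with hN
  have hN_pos : (0:ℝ) < N := by positivity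
  have hinvp : 1 ≤ 1/p := by
    rw [le_div_iff₀ hp0]; linarith
  have hmean : (∑ u : Fin d → Bool, (1/N) * (c u ^ p)) ^ (1/p)
      ≤ ∑ u : Fin d → Bool, (1/N) * ((c u ^ p) ^ (1/p)) := by
    refine Real.rpow_arith_mean_le_arith_mean_rpow Finset.univ _ _
      (fun i _ => by positivity) ?_ (fun i _ => Real.rpow_nonneg (hc_nonneg i) p) hinvp
    rw [Finset.sum_const, Finset.card_univ, hcard, nsmul_eq_mul, hn]
    push_cast
    rw [mul_one_div, hN, div_self hN_pos.ne']
  have hrw1 : ∀ u : Fin d → Bool, (c u ^ p) ^ (1/p) = c u := by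
    intro u
    rw [← Real.rpow_mul (hc_nonneg u), mul_one_div, div_self hp0.ne', Real.rpow_one]
  have hmean' : ((1/N) * S) ^ (1/p) ≤ 1/N := by
    calc ((1/N) * S) ^ (1/p)
        = (∑ u : Fin d → Bool, (1/N) * (c u ^ p)) ^ (1/p) := by rw [← Finset.mul_sum, hS]
      _ ≤ ∑ u : Fin d → Bool, (1/N) * ((c u ^ p) ^ (1/p)) := hmean
      _ = 1/N := by simp_rw [hrw1]; rw [← Finset.mul_sum, hc_sum, mul_one]
  have hSle : S ^ (1/p) ≤ N ^ (1/p) * (1/N) := by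
    have h1 : ((1/N) * S) ^ (1/p) = (1/N) ^ (1/p) * S ^ (1/p) :=
      Real.mul_rpow (by positivity) hS_nonneg
    have h2 : (1/N) ^ (1/p) = (N ^ (1/p))⁻¹ := by
      rw [one_div, ← Real.inv_rpow hN_pos.le]
    have hpow : (0:ℝ) < N ^ (1/p) := Real.rpow_pos_of_pos hN_pos _
    have h3 := hmean'
    rw [h1, h2] at h3
    calc S ^ (1/p) = N ^ (1/p) * ((N ^ (1/p))⁻¹ * S ^ (1/p)) := by field_simp
      _ ≤ N ^ (1/p) * (1/N) := mul_le_mul_of_nonneg_left h3 hpow.le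
  rw [hsum, Real.mul_rpow (Real.rpow_nonneg (abs_nonneg t) p) hS_nonneg,
    ← Real.rpow_mul (abs_nonneg t), mul_one_div, div_self hp0.ne', Real.rpow_one]
  have hNN : (2:ℝ) ^ (d:ℝ) = N := by rw [hN, Real.rpow_natCast]
  rw [hNN, Real.rpow_sub hN_pos, Real.rpow_one]
  calc |t| * S ^ (1/p) ≤ |t| * (N ^ (1/p) * (1/N)) :=
        mul_le_mul_of_nonneg_left hSle (abs_nonneg t)
    _ = N ^ (1/p) / N * |t| := by ring
end

section
/- Let d ≥ 1 and equip ℝ^d with the ℓ¹ norm; let 0 < p ≤ 1. With r : [0,1]^d → F_p({0,1}^d) the coordinatewise multilinear interpolation r(x) = ∑_{v∈{0,1}^d} x^{(v)} δ(v), for all x, y ∈ [0,1]^d we have ‖r(x) - r(y)‖_p ≤ 2^{(d-1)(1/p-1)} · d^{1/p-1} · |x - y|₁. -/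
/-! Let `w_j` be the point whose first `j` coordinates are those of `y` and the others those
of `x`. Since `r` is affine in each coordinate,
`r(w_k) - r(w_{k+1}) = (x_k - y_k) ∑_u w_k^{(u)} (δ(u¹) - δ(u⁰))`, where `u` runs over the
`2^{d-1}` vertices of the facet orthogonal to the `k`-th axis and `u¹`, `u⁰` are its lifts with
`k`-th coordinate `1` and `0`; these lie at ℓ¹ distance `1`, so each difference is a molecule.
The weights `w_k^{(u)}` are nonnegative with sum `1`, hence
`∑_u (w_k^{(u)})^p ≤ 2^{(d-1)(1-p)}` by the power mean inequality, and the same inequality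
bounds `∑_k |x_k - y_k|^p` by `d^{1-p} |x - y|₁^p`. -/

open Finset

theorem Real.sum_rpow_le_card_rpow_mul_rpow_sum {ι : Type*} (s : Finset ι) {f : ι → ℝ}
    (hf : ∀ i ∈ s, 0 ≤ f i) {p : ℝ} (hp0 : 0 < p) (hp1 : p ≤ 1) :
    ∑ i ∈ s, f i ^ p ≤ (#s : ℝ) ^ (1 - p) * (∑ i ∈ s, f i) ^ p := by
  have h := Real.rpow_sum_le_const_mul_sum_rpow_of_nonneg (s := s) (f := fun i => f i ^ p)
    (one_le_one_div hp0 hp1) fun i hi => Real.rpow_nonneg (hf i hi) p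
  have hinv : ∑ i ∈ s, (f i ^ p) ^ (1 / p) = ∑ i ∈ s, f i :=
    sum_congr rfl fun i hi => by rw [one_div, Real.rpow_rpow_inv (hf i hi) hp0.ne']
  rw [hinv] at h
  have hS : 0 ≤ ∑ i ∈ s, f i ^ p := sum_nonneg fun i hi => Real.rpow_nonneg (hf i hi) p
  calc ∑ i ∈ s, f i ^ p = ((∑ i ∈ s, f i ^ p) ^ (1 / p)) ^ p := by
        rw [← Real.rpow_mul hS, one_div_mul_cancel hp0.ne', Real.rpow_one]
    _ ≤ ((#s : ℝ) ^ (1 / p - 1) * ∑ i ∈ s, f i) ^ p := by gcongr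
    _ = (#s : ℝ) ^ (1 - p) * (∑ i ∈ s, f i) ^ p := by
        rw [Real.mul_rpow (by positivity) (sum_nonneg hf), ← Real.rpow_mul (by positivity)]
        congr 2
        field_simp

theorem Real.rpow_one_sub_mul_rpow_one_div {a b c p : ℝ} (ha : 0 ≤ a) (hb : 0 ≤ b) (hc : 0 ≤ c)
    (hp : 0 < p) :
    (a ^ (1 - p) * b ^ (1 - p) * c ^ p) ^ (1 / p) = a ^ (1 / p - 1) * b ^ (1 / p - 1) * c := by
  have hq : (1 - p) * (1 / p) = 1 / p - 1 := by field_simp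
  rw [Real.mul_rpow (by positivity) (by positivity), Real.mul_rpow (by positivity) (by positivity),
    ← Real.rpow_mul ha, ← Real.rpow_mul hb, ← Real.rpow_mul hc, hq, mul_one_div_cancel hp.ne',
    Real.rpow_one]

noncomputable def coordPath {d : ℕ} (x y : Fin d → ℝ) (j : ℕ) : Fin d → ℝ :=
  fun i => if (i : ℕ) < j then y i else x i

section
variable {d : ℕ}

theorem sum_coeffR (x : Fin d → ℝ) : ∑ v, coeffR x v = 1 := by
  calc ∑ v, coeffR x v = ∏ i, ∑ b : Bool, (if b then x i else 1 - x i) :=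
        (Fintype.prod_sum fun i (b : Bool) => if b then x i else 1 - x i).symm
    _ = 1 := by simp

theorem coeffR_nonneg {x : Fin d → ℝ} (hx : ∀ i, x i ∈ Set.Icc (0 : ℝ) 1) (v : Fin d → Bool) :
    0 ≤ coeffR x v :=
  prod_nonneg fun i _ => by split_ifs <;> linarith [(hx i).1, (hx i).2]

theorem coordPath_zero (x y : Fin d → ℝ) : coordPath x y 0 = x := by
  funext i; simp [coordPath]

theorem coordPath_last (x y : Fin d → ℝ) : coordPath x y d = y := by
  funext i; simp [coordPath]

theorem coordPath_mem_Icc {x y : Fin d → ℝ} (hx : ∀ i, x i ∈ Set.Icc (0 : ℝ) 1)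
    (hy : ∀ i, y i ∈ Set.Icc (0 : ℝ) 1) (j : ℕ) (i : Fin d) :
    coordPath x y j i ∈ Set.Icc (0 : ℝ) 1 := by
  unfold coordPath; split_ifs
  · exact hy i
  · exact hx i

theorem sInf_pNormSet_le_of_eq_sum {ι : Type*} [Fintype ι] (p : ℝ) {m : (Fin d → Bool) → ℝ}
    (a : ι → ℝ) (x y : ι → Fin d → Bool) (hxy : ∀ i, x i ≠ y i)
    (hm : m = ∑ i, a i • mol (x i) (y i)) :
    sInf (pNormSet p m) ≤ (∑ i, |a i| ^ p) ^ (1 / p) := by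
  let e := (Fintype.equivFin ι).symm
  refine csInf_le ⟨0, ?_⟩ ⟨Fintype.card ι, a ∘ e, x ∘ e, y ∘ e, fun i => hxy _, ?_, ?_⟩
  · rintro c ⟨_, _, _, _, -, -, rfl⟩
    positivity
  · rw [hm]; exact (e.sum_comp fun i => a i • mol (x i) (y i)).symm
  · simp only [Function.comp_apply, e.sum_comp fun i => |a i| ^ p]

end

section
variable {n : ℕ}

theorem coeffR_insertNth (x : Fin (n + 1) → ℝ) (k : Fin (n + 1)) (b : Bool) (u : Fin n → Bool) :
    coeffR x (k.insertNth b u) = (if b then x k else 1 - x k) * coeffR (x ∘ k.succAbove) u := by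
  simp only [coeffR, Fin.prod_univ_succAbove _ k, Fin.insertNth_apply_same,
    Fin.insertNth_apply_succAbove, Function.comp_apply]

theorem rMap_eq_sum_insertNth (x : Fin (n + 1) → ℝ) (k : Fin (n + 1)) :
    rMap x = ∑ u, coeffR (x ∘ k.succAbove) u •
      (x k • deltaV (k.insertNth true u) + (1 - x k) • deltaV (k.insertNth false u)) := by
  rw [rMap, ← (Fin.insertNthEquiv (fun _ => Bool) k).sum_comp, Fintype.sum_prod_type_right]
  refine sum_congr rfl fun u _ => ?_
  dsimp only [Fin.insertNthEquiv, Equiv.coe_fn_mk]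
  simp only [Fintype.sum_bool, coeffR_insertNth, if_true, Bool.false_eq_true, if_false]
  module

theorem l1dist_vert_insertNth (k : Fin (n + 1)) (u : Fin n → Bool) :
    l1dist (vert (k.insertNth true u)) (vert (k.insertNth false u)) = 1 := by
  simp [l1dist, vert, Fin.sum_univ_succAbove _ k]

theorem mol_insertNth (k : Fin (n + 1)) (u : Fin n → Bool) :
    mol (k.insertNth true u) (k.insertNth false u) =
      deltaV (k.insertNth true u) - deltaV (k.insertNth false u) := by
  funext w
  simp only [mol, deltaV, l1dist_vert_insertNth, div_one, Pi.sub_apply]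
  ring

theorem rMap_sub_rMap_eq_sum_mol_of_comp_succAbove {x y : Fin (n + 1) → ℝ} (k : Fin (n + 1))
    (h : x ∘ k.succAbove = y ∘ k.succAbove) :
    rMap x - rMap y = ∑ u, ((x k - y k) * coeffR (x ∘ k.succAbove) u) •
      mol (k.insertNth true u) (k.insertNth false u) := by
  rw [rMap_eq_sum_insertNth x k, rMap_eq_sum_insertNth y k, ← h, ← sum_sub_distrib]
  refine sum_congr rfl fun u _ => ?_
  rw [mol_insertNth]
  module

theorem coordPath_comp_succAbove (x y : Fin (n + 1) → ℝ) (k : Fin (n + 1)) :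
    coordPath x y k ∘ k.succAbove = coordPath x y (k + 1) ∘ k.succAbove := by
  funext j
  have := Fin.val_ne_of_ne (Fin.succAbove_ne k j)
  simp only [Function.comp_apply, coordPath]
  split_ifs <;> first | rfl | omega

theorem rMap_sub_rMap_eq_sum_mol (x y : Fin (n + 1) → ℝ) :
    rMap x - rMap y = ∑ k, ∑ u, ((x k - y k) * coeffR (coordPath x y k ∘ k.succAbove) u) •
      mol (k.insertNth true u) (k.insertNth false u) := by
  calc rMap x - rMap y
      = ∑ k : Fin (n + 1), (rMap (coordPath x y k) - rMap (coordPath x y (k + 1))) := by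
        rw [Fin.sum_univ_eq_sum_range
            (fun j => rMap (coordPath x y j) - rMap (coordPath x y (j + 1))),
          sum_range_sub', coordPath_zero, coordPath_last]
    _ = _ := sum_congr rfl fun k _ => by
        rw [rMap_sub_rMap_eq_sum_mol_of_comp_succAbove k (coordPath_comp_succAbove x y k)]
        simp [coordPath]

theorem sum_abs_mul_coeffR_rpow_le {z : Fin n → ℝ} (hz : ∀ i, z i ∈ Set.Icc (0 : ℝ) 1) {p : ℝ}
    (hp0 : 0 < p) (hp1 : p ≤ 1) (c : ℝ) :
    ∑ u, |c * coeffR z u| ^ p ≤ (2 ^ n : ℝ) ^ (1 - p) * |c| ^ p := by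
  have h := Real.sum_rpow_le_card_rpow_mul_rpow_sum univ (fun u _ => coeffR_nonneg hz u) hp0 hp1
  simp only [sum_coeffR, Real.one_rpow, mul_one, card_univ, Fintype.card_fun, Fintype.card_bool,
    Fintype.card_fin, Nat.cast_pow, Nat.cast_ofNat] at h
  simp_rw [abs_mul, Real.mul_rpow (abs_nonneg c) (abs_nonneg _), ← mul_sum,
    abs_of_nonneg (coeffR_nonneg hz _), mul_comm _ (|c| ^ p)]
  gcongr

end

/-- Lipschitz estimate for the retraction on the whole cube:
‖r(x) - r(y)‖_p ≤ C(p, 2^{d-1}) C(p, d) |x - y|₁. -/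
theorem stmt16 (d : ℕ) (hd : 1 ≤ d) (p : ℝ) (hp0 : 0 < p) (hp1 : p ≤ 1)
    (x y : Fin d → ℝ)
    (hx : ∀ i, x i ∈ Set.Icc (0 : ℝ) 1) (hy : ∀ i, y i ∈ Set.Icc (0 : ℝ) 1) :
    sInf (pNormSet p (rMap x - rMap y)) ≤
      ((2 : ℝ) ^ ((d : ℝ) - 1)) ^ (1 / p - 1) * (d : ℝ) ^ (1 / p - 1) * l1dist x y := by
  obtain ⟨n, rfl⟩ : ∃ n, d = n + 1 := ⟨d - 1, by omega⟩
  have hL : 0 ≤ l1dist x y := sum_nonneg fun _ _ => abs_nonneg _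
  have hdist : ∑ k, |x k - y k| ^ p ≤ ((n + 1 : ℕ) : ℝ) ^ (1 - p) * l1dist x y ^ p := by
    simpa [l1dist] using
      Real.sum_rpow_le_card_rpow_mul_rpow_sum univ (fun k _ => abs_nonneg (x k - y k)) hp0 hp1
  have hsum : ∑ k, ∑ u, |(x k - y k) * coeffR (coordPath x y k ∘ k.succAbove) u| ^ p ≤
      (2 ^ n : ℝ) ^ (1 - p) * ((n + 1 : ℕ) : ℝ) ^ (1 - p) * l1dist x y ^ p := calc
    _ ≤ ∑ k, (2 ^ n : ℝ) ^ (1 - p) * |x k - y k| ^ p := sum_le_sum fun k _ =>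
        sum_abs_mul_coeffR_rpow_le (fun j => coordPath_mem_Icc hx hy k _) hp0 hp1 _
    _ ≤ _ := by rw [← mul_sum, mul_assoc]; gcongr
  calc sInf (pNormSet p (rMap x - rMap y))
      ≤ (∑ k, ∑ u, |(x k - y k) * coeffR (coordPath x y k ∘ k.succAbove) u| ^ p) ^ (1 / p) := by
        rw [← Fintype.sum_prod_type']
        refine sInf_pNormSet_le_of_eq_sum p _ (fun ku => ku.1.insertNth true ku.2)
          (fun ku => ku.1.insertNth false ku.2) (fun ku h => by simpa using congrFun h ku.1) ?_
        rw [Fintype.sum_prod_type, rMap_sub_rMap_eq_sum_mol]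
    _ ≤ ((2 ^ n : ℝ) ^ (1 - p) * ((n + 1 : ℕ) : ℝ) ^ (1 - p) * l1dist x y ^ p) ^ (1 / p) := by
        gcongr
    _ = _ := by
        rw [Real.rpow_one_sub_mul_rpow_one_div (by positivity) (by positivity) hL hp0]
        norm_num [← Real.rpow_natCast]
end

section
/- Let (M, ρ) be a metric space, N ⊆ M a dense subset containing the base point, 0 < p ≤ 1, and m an element of the linear span of {δ(x) : x ∈ N} inside F_p(M). Then ‖m‖_{F_p(M)} = inf (∑_{i=1}^n |a_i|^p)^{1/p}, where the infimum runs over all finite representations m = ∑_{i=1}^n a_i μ_i with μ_i elementary molecules of N (i.e., μ_i = (δ(x)-δ(y))/ρ(x,y) with x ≠ y both in N). -/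
open Classical in
/-- The set of values (∑ |aᵢ|^p)^{1/p} over all decompositions of m into elementary
molecules with endpoints in S. Here an element of the span of the δ's is modelled
as a (finitely supported) function m : M → ℝ with total mass zero, δ(x) being
χ_x - χ_basepoint, and the molecule (δ(x)-δ(y))/ρ(x,y) being (χ_x - χ_y)/ρ(x,y). -/
noncomputable def molDecompSet (p : ℝ) {M : Type*} [MetricSpace M] (S : Set M)
    (m : M → ℝ) : Set ℝ :=
  {c | ∃ (n : ℕ) (a : Fin n → ℝ) (x y : Fin n → M),
    (∀ i, x i ∈ S ∧ y i ∈ S ∧ x i ≠ y i) ∧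
    m = (∑ i, a i • fun w =>
      ((if w = x i then (1 : ℝ) else 0) - (if w = y i then 1 else 0)) / dist (x i) (y i)) ∧
    c = (∑ i, |a i| ^ p) ^ (1 / p)}

/-!
Take a decomposition of `m` into molecules of `M` and `ε > 0`. Density of `N` yields a
permutation `σ` of `M` sending every endpoint outside `N` to a point of `N` within `δ` that is not
an endpoint, and fixing the endpoints in `N`. As `m` vanishes off `N` and off the endpoints, `σ`
fixes the support of `m`, so pushing the decomposition forward along `σ` (rescaling each
coefficient by the ratio of the new to the old distance) still represents `m`. For `δ` small
against all distances `ρ(xᵢ, yᵢ)` the ratios are at most `1 + ε`, hence so is the loss in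
cost.
-/

open Classical Filter Topology

section Perturbation

variable {M : Type*} [MetricSpace M] {N : Set M}

theorem Dense.exists_mem_dist_lt_notMem (hN : Dense N) {z : M} (hz : z ∉ N) (B : Finset M)
    {δ : ℝ} (hδ : 0 < δ) : ∃ w ∈ N, dist w z < δ ∧ w ∉ B := by
  have hU : Metric.ball z δ ∩ (↑(B.erase z))ᶜ ∈ 𝓝 z :=
    Filter.inter_mem (Metric.ball_mem_nhds z hδ)
      ((B.erase z).isClosed.isOpen_compl.mem_nhds (by simp))
  obtain ⟨w, hwN, hwz, hwB⟩ := hN.inter_nhds_nonempty hU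
  have hne : w ≠ z := fun h => hz (h ▸ hwN)
  exact ⟨w, hwN, hwz, fun h => hwB (Finset.mem_erase.2 ⟨hne, h⟩)⟩

theorem Dense.exists_perm_dist_lt_of_notMem (hN : Dense N) {δ : ℝ} (hδ : 0 < δ)
    (A F : Finset M) (hF : ∀ u ∈ F, u ∉ N) :
    ∃ σ : Equiv.Perm M,
      (∀ u ∈ F, σ u ∈ N ∧ dist (σ u) u < δ) ∧ ∀ u ∈ A, u ∉ F → σ u = u := by
  induction F using Finset.induction_on generalizing A with
  | empty => exact ⟨1, by simp, fun _ _ _ => rfl⟩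
  | @insert z F hzF ih =>
    obtain ⟨σ, hσF, hσA⟩ := ih (insert z A) fun u hu => hF u (Finset.mem_insert_of_mem hu)
    have hz : z ∉ N := hF z (Finset.mem_insert_self z F)
    obtain ⟨w, hwN, hwz, hwB⟩ := hN.exists_mem_dist_lt_notMem hz (A ∪ F.image σ) hδ
    have hσz : σ z = z := hσA z (Finset.mem_insert_self z A) hzF
    -- `w` avoids `A` and `σ '' F`, so the swap only changes `σ` at `z`.
    refine ⟨σ.trans (Equiv.swap z w), ?_, ?_⟩
    · intro u hu
      rcases Finset.mem_insert.1 hu with rfl | hu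
      · simpa [hσz] using ⟨hwN, hwz⟩
      · have hσuz : σ u ≠ z := fun h => hz (h ▸ (hσF u hu).1)
        have hσuw : σ u ≠ w := fun h => hwB (by simp [← h, Finset.mem_image_of_mem σ hu])
        simpa [Equiv.swap_apply_of_ne_of_ne hσuz hσuw] using hσF u hu
    · intro u hu huF
      rw [Finset.mem_insert, not_or] at huF
      have huw : u ≠ w := fun h => hwB (by simp [← h, hu])
      simp [hσA u (Finset.mem_insert_of_mem hu) huF.2,
        Equiv.swap_apply_of_ne_of_ne huF.1 huw]

theorem Dense.exists_perm_dist_lt (hN : Dense N) {δ : ℝ} (hδ : 0 < δ) (E : Finset M) :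
    ∃ σ : Equiv.Perm M, ∀ u ∈ E, σ u ∈ N ∧ dist (σ u) u < δ ∧ (u ∈ N → σ u = u) := by
  obtain ⟨σ, hσF, hσE⟩ := hN.exists_perm_dist_lt_of_notMem hδ E (E.filter (· ∉ N))
    fun u hu => (Finset.mem_filter.1 hu).2
  refine ⟨σ, fun u hu => ?_⟩
  by_cases huN : u ∈ N
  · have hσu : σ u = u := hσE u hu fun h => (Finset.mem_filter.1 h).2 huN
    simp [hσu, huN, hδ]
  · obtain ⟨hσuN, hσu⟩ := hσF u (Finset.mem_filter.2 ⟨hu, huN⟩)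
    exact ⟨hσuN, hσu, (absurd · huN)⟩

end Perturbation

section Molecules

variable {M : Type*} [MetricSpace M]

noncomputable def molecule (x y : M) : M → ℝ :=
  fun w => ((if w = x then 1 else 0) - (if w = y then 1 else 0)) / dist x y

theorem molecule_apply_of_ne {x y w : M} (hx : w ≠ x) (hy : w ≠ y) : molecule x y w = 0 := by
  simp [molecule, hx, hy]

theorem molecule_perm (σ : Equiv.Perm M) (x y : M) :
    molecule (σ x) (σ y) = (dist x y / dist (σ x) (σ y)) • (molecule x y ∘ σ.symm) := by
  rcases eq_or_ne x y with rfl | hxy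
  · funext w
    simp [molecule]
  have hd : dist x y ≠ 0 := dist_ne_zero.2 hxy
  have hd' : dist (σ x) (σ y) ≠ 0 := dist_ne_zero.2 (σ.injective.ne hxy)
  funext w
  simp only [molecule, Pi.smul_apply, Function.comp_apply, Equiv.symm_apply_eq, smul_eq_mul]
  field_simp

end Molecules

theorem Equiv.Perm.comp_symm_eq_self {α β : Type*} [Zero β] {f : α → β} {σ : Equiv.Perm α}
    (hσ : ∀ w, f w ≠ 0 → σ w = w) : f ∘ σ.symm = f := by
  funext w
  rw [Function.comp_apply]
  by_cases hw : f w = 0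
  · by_contra h
    rw [hw] at h
    have hfix := hσ _ h
    rw [Equiv.apply_symm_apply] at hfix
    exact h (hfix ▸ hw)
  · rw [σ.symm_apply_eq.2 (hσ w hw).symm]

theorem rpow_sum_abs_rpow_le_mul {ι : Type*} (s : Finset ι) {f g : ι → ℝ} {K p : ℝ}
    (hK : 0 ≤ K) (hp : 0 < p) (hfg : ∀ i ∈ s, |f i| ≤ K * |g i|) :
    (∑ i ∈ s, |f i| ^ p) ^ (1 / p) ≤ K * (∑ i ∈ s, |g i| ^ p) ^ (1 / p) := by
  have hg : 0 ≤ ∑ i ∈ s, |g i| ^ p := by positivity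
  calc (∑ i ∈ s, |f i| ^ p) ^ (1 / p)
      ≤ (∑ i ∈ s, K ^ p * |g i| ^ p) ^ (1 / p) := by
        gcongr with i hi
        exact (Real.rpow_le_rpow (abs_nonneg _) (hfg i hi) hp.le).trans_eq
          (Real.mul_rpow hK (abs_nonneg _))
    _ = K * (∑ i ∈ s, |g i| ^ p) ^ (1 / p) := by
        rw [← Finset.mul_sum, Real.mul_rpow (by positivity) hg, one_div,
          Real.rpow_rpow_inv hK hp.ne']

section MolDecomp

variable {M : Type*} [MetricSpace M] {p : ℝ} {m : M → ℝ}

theorem molDecompSet_nonneg {S : Set M} {c : ℝ} (hc : c ∈ molDecompSet p S m) : 0 ≤ c := by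
  obtain ⟨n, a, x, y, -, -, rfl⟩ := hc
  positivity

theorem molDecompSet_mono {S T : Set M} (hST : S ⊆ T) :
    molDecompSet p S m ⊆ molDecompSet p T m := by
  rintro c ⟨n, a, x, y, hxy, hm, hc⟩
  exact ⟨n, a, x, y, fun i => ⟨hST (hxy i).1, hST (hxy i).2.1, (hxy i).2.2⟩, hm, hc⟩

theorem exists_mem_molDecompSet_le_one_add_mul {N : Set M} (hN : Dense N) (hp : 0 < p)
    (hm : ∀ x ∉ N, m x = 0) {c : ℝ} (hc : c ∈ molDecompSet p Set.univ m) {ε : ℝ}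
    (hε : 0 < ε) : ∃ c' ∈ molDecompSet p N m, c' ≤ (1 + ε) * c := by
  obtain ⟨n, a, x, y, hxy, hm_eq, rfl⟩ := hc
  change m = ∑ i, a i • molecule (x i) (y i) at hm_eq
  have hd : ∀ i, 0 < dist (x i) (y i) := fun i => dist_pos.2 (hxy i).2.2
  obtain ⟨δ, hδ, hδ_pos⟩ : ∃ δ, (∀ i, 2 * δ < ε * dist (x i) (y i)) ∧ 0 < δ := by
    have h2δ : Tendsto (fun δ : ℝ => 2 * δ) (𝓝[>] 0) (𝓝 0) :=
      tendsto_nhdsWithin_of_tendsto_nhds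
        (by simpa using (continuous_const_mul (2 : ℝ)).tendsto 0)
    have hδ_lt : ∀ i, ∀ᶠ δ in 𝓝[>] 0, 2 * δ < ε * dist (x i) (y i) := fun i =>
      h2δ.eventually (gt_mem_nhds (mul_pos hε (hd i)))
    exact ((eventually_all.2 hδ_lt).and self_mem_nhdsWithin).exists
  set E := Finset.univ.image x ∪ Finset.univ.image y
  have hxE : ∀ i, x i ∈ E := by simp [E]
  have hyE : ∀ i, y i ∈ E := by simp [E]
  obtain ⟨σ, hσ⟩ := hN.exists_perm_dist_lt hδ_pos E
  have hfix : ∀ w, m w ≠ 0 → σ w = w := by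
    intro w hw
    have hwE : w ∈ E := by
      by_contra hwE
      refine hw (hm_eq ▸ ?_)
      rw [Finset.sum_apply]
      refine Finset.sum_eq_zero fun i _ => ?_
      rw [Pi.smul_apply, molecule_apply_of_ne (ne_of_mem_of_not_mem (hxE i) hwE).symm
        (ne_of_mem_of_not_mem (hyE i) hwE).symm, smul_zero]
    exact (hσ w hwE).2.2 (not_not.1 (mt (hm w) hw))
  have hdist : ∀ i, dist (σ (x i)) (σ (y i)) ≤ (1 + ε) * dist (x i) (y i) := by
    intro i
    have hx := (hσ _ (hxE i)).2.1
    have hy := (hσ _ (hyE i)).2.1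
    rw [dist_comm] at hy
    linarith [dist_triangle4 (σ (x i)) (x i) (y i) (σ (y i)), hδ i]
  refine ⟨_, ⟨n, fun i => a i * (dist (σ (x i)) (σ (y i)) / dist (x i) (y i)),
    fun i => σ (x i), fun i => σ (y i),
    fun i => ⟨(hσ _ (hxE i)).1, (hσ _ (hyE i)).1, σ.injective.ne (hxy i).2.2⟩, ?_, rfl⟩, ?_⟩
  · change m = ∑ i, _ • molecule (σ (x i)) (σ (y i))
    conv_lhs => rw [← Equiv.Perm.comp_symm_eq_self hfix, hm_eq]
    funext w
    simp only [Function.comp_apply, Finset.sum_apply, Pi.smul_apply, molecule_perm, smul_eq_mul]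
    refine Finset.sum_congr rfl fun i _ => ?_
    have hd' : dist (σ (x i)) (σ (y i)) ≠ 0 := dist_ne_zero.2 (σ.injective.ne (hxy i).2.2)
    field_simp [(hd i).ne']
  · refine rpow_sum_abs_rpow_le_mul (K := 1 + ε) _ (by positivity) hp fun i _ => ?_
    rw [abs_mul, abs_of_nonneg (div_nonneg dist_nonneg dist_nonneg), mul_comm]
    exact mul_le_mul_of_nonneg_right ((div_le_iff₀ (hd i)).2 (hdist i)) (abs_nonneg _)

end MolDecomp

theorem Real.sInf_eq_sInf_of_forall_exists_le_one_add_mul {A B : Set ℝ} (hAB : A ⊆ B)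
    (hB : ∀ c ∈ B, 0 ≤ c) (h : ∀ c ∈ B, ∀ ε > 0, ∃ c' ∈ A, c' ≤ (1 + ε) * c) :
    sInf B = sInf A := by
  rcases B.eq_empty_or_nonempty with rfl | ⟨c₀, hc₀⟩
  · rw [Set.subset_empty_iff.1 hAB]
  have hBbdd : BddBelow B := ⟨0, hB⟩
  obtain ⟨c₁, hc₁, -⟩ := h c₀ hc₀ 1 one_pos
  refine le_antisymm (csInf_le_csInf hBbdd ⟨c₁, hc₁⟩ hAB) (le_csInf ⟨c₀, hc₀⟩ fun c hc => ?_)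
  have hlim : Tendsto (fun ε => (1 + ε) * c) (𝓝[>] 0) (𝓝 c) :=
    tendsto_nhdsWithin_of_tendsto_nhds (by simpa using
      (by fun_prop : Continuous fun ε : ℝ => (1 + ε) * c).tendsto 0)
  refine ge_of_tendsto hlim (eventually_nhdsWithin_of_forall fun ε hε => ?_)
  obtain ⟨c', hc', hle⟩ := h c hc ε hε
  exact (csInf_le (hBbdd.mono hAB) hc').trans hle

theorem stmt17_general {M : Type*} [MetricSpace M] (N : Set M)
    (hdense : Dense N)
    (p : ℝ) (hp0 : 0 < p)
    (m : M → ℝ) (s : Finset M) (hs : ↑s ⊆ N)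
    (hsupp : ∀ x ∉ s, m x = 0) :
    sInf (molDecompSet p Set.univ m) = sInf (molDecompSet p N m) :=
  Real.sInf_eq_sInf_of_forall_exists_le_one_add_mul (molDecompSet_mono (Set.subset_univ N))
    (fun _ => molDecompSet_nonneg) fun _ hc _ hε =>
      exists_mem_molDecompSet_le_one_add_mul hdense hp0
        (fun x hx => hsupp x (mt (@hs x) hx)) hc hε

/-- Molecules over a dense subset N containing the basepoint already compute the
free p-norm of any element of the span of {δ(x) : x ∈ N}. -/
theorem stmt17 {M : Type*} [MetricSpace M] (base : M) (N : Set M)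
    (hdense : Dense N) (hbase : base ∈ N)
    (p : ℝ) (hp0 : 0 < p) (hp1 : p ≤ 1)
    (m : M → ℝ) (s : Finset M) (hs : ↑s ⊆ N)
    (hsupp : ∀ x ∉ s, m x = 0) (hsum : ∑ x ∈ s, m x = 0) :
    sInf (molDecompSet p Set.univ m) = sInf (molDecompSet p N m) :=
  stmt17_general N hdense p hp0 m s hs hsupp
end

section
/- Let 0 < p ≤ 1. Suppose X₁, X₂ are p-Banach spaces, and Y₁ ⊆ X₁, Y₂ ⊆ X₂ are p-norming sets with constants (α, β) and (α', β') respectively, i.e., α · closure(aconv_p Y₁) ⊆ B_{X₁} ⊆ β · closure(aconv_p Y₁) and α' · closure(aconv_p Y₂) ⊆ B_{X₂} ⊆ β' · closure(aconv_p Y₂), where aconv_p denotes the absolutely p-convex hull. Assume additionally aconv_p Y_i ⊇ c_i B_{X_i} ∩ span Y_i for some c_i > 0 (i = 1,2). If T : span Y₁ → X₂ is an injective linear map with T(Y₁) = Y₂, then T extends to a surjective isomorphism T̃ : X₁ → X₂ with ‖T̃‖ ≤ β/α' and ‖T̃⁻¹‖ ≤ β'/α. -/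
open Pointwise

/-- The absolutely p-convex hull of a set: the smallest set containing Z and closed
under combinations a•x + b•y with |a|^p + |b|^p ≤ 1. -/
def paconv (p : ℝ) {X : Type*} [AddCommGroup X] [Module ℝ X] (Z : Set X) : Set X :=
  ⋂₀ {A : Set X | Z ⊆ A ∧ ∀ x ∈ A, ∀ y ∈ A, ∀ a b : ℝ,
      |a| ^ p + |b| ^ p ≤ 1 → a • x + b • y ∈ A}


section paconvLemmas

variable {p : ℝ} {X W : Type*} [AddCommGroup X] [Module ℝ X] [AddCommGroup W] [Module ℝ W]

lemma paconv_subset_of {Z A : Set X} (hZA : Z ⊆ A)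
    (hA : ∀ x ∈ A, ∀ y ∈ A, ∀ a b : ℝ, |a| ^ p + |b| ^ p ≤ 1 → a • x + b • y ∈ A) :
    paconv p Z ⊆ A :=
  Set.sInter_subset_of_mem ⟨hZA, hA⟩

lemma subset_paconv (Z : Set X) : Z ⊆ paconv p Z :=
  fun _ hx => Set.mem_sInter.2 fun _ hA => hA.1 hx

lemma paconv_rule {Z : Set X} {x y : X} (hx : x ∈ paconv p Z) (hy : y ∈ paconv p Z)
    {a b : ℝ} (hab : |a| ^ p + |b| ^ p ≤ 1) : a • x + b • y ∈ paconv p Z :=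
  Set.mem_sInter.2 fun A hA =>
    hA.2 x (Set.mem_sInter.1 hx A hA) y (Set.mem_sInter.1 hy A hA) a b hab

lemma paconv_subset_span (Z : Set X) : paconv p Z ⊆ (Submodule.span ℝ Z : Set X) :=
  paconv_subset_of Submodule.subset_span (fun _ hx _ hy a b _ =>
    Submodule.add_mem _ (Submodule.smul_mem _ a hx) (Submodule.smul_mem _ b hy))

lemma image_paconv (f : X →ₗ[ℝ] W) (Z : Set X) : f '' paconv p Z = paconv p (f '' Z) := by
  apply Set.Subset.antisymm
  · rintro _ ⟨x, hx, rfl⟩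
    have h : paconv p Z ⊆ f ⁻¹' (paconv p (f '' Z)) := paconv_subset_of
      (fun z hz => subset_paconv _ (Set.mem_image_of_mem f hz))
      (fun x hx y hy a b hab => by
        simp only [Set.mem_preimage, map_add, map_smul]
        exact paconv_rule hx hy hab)
    exact h hx
  · apply paconv_subset_of
    · exact Set.image_mono (subset_paconv Z)
    · rintro _ ⟨x, hx, rfl⟩ _ ⟨y, hy, rfl⟩ a b hab
      exact ⟨a • x + b • y, paconv_rule hx hy hab, by simp⟩

end paconvLemmas



structure PNormData (p : ℝ) {X : Type*} [AddCommGroup X] [Module ℝ X] [MetricSpace X]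
    (N : X → ℝ) : Prop where
  nonneg : ∀ x, 0 ≤ N x
  hom : ∀ (a : ℝ) (x : X), N (a • x) = |a| * N x
  tri : ∀ x y, N (x + y) ^ p ≤ N x ^ p + N y ^ p
  dist_eq : ∀ x y, dist x y = N (x - y) ^ p

namespace PNormData

variable {p : ℝ} {X : Type*} [AddCommGroup X] [Module ℝ X] [MetricSpace X] {N : X → ℝ}
  (h : PNormData p N)
include h

lemma zero : N 0 = 0 := by
  have := h.hom 0 0; simpa using this

lemma neg (x : X) : N (-x) = N x := by
  have := h.hom (-1) x; simpa using this

lemma pow_lip (x y : X) : |N x ^ p - N y ^ p| ≤ dist x y := by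
  rw [abs_sub_le_iff]
  constructor
  · have h1 : N x ^ p ≤ N y ^ p + N (x - y) ^ p := by
      have := h.tri y (x - y); simpa using this
    rw [h.dist_eq]; linarith
  · have h1 : N y ^ p ≤ N x ^ p + N (y - x) ^ p := by
      have := h.tri x (y - x); simpa using this
    have h2 : N (y - x) = N (x - y) := by rw [← h.neg (x - y)]; congr 1; abel
    rw [h.dist_eq]; rw [h2] at h1; linarith

lemma cont_pow : Continuous fun x => N x ^ p := by
  have : LipschitzWith 1 fun x => N x ^ p := by
    apply LipschitzWith.of_dist_le_mul
    intro x y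
    rw [Real.dist_eq, NNReal.coe_one, one_mul]
    exact h.pow_lip x y
  exact this.continuous

lemma cont (hp0 : 0 < p) : Continuous N := by
  have key : (fun z : ℝ => z ^ p⁻¹) ∘ (fun x => N x ^ p) = N := by
    funext x
    simp only [Function.comp_apply]
    rw [← Real.rpow_mul (h.nonneg x), mul_inv_cancel₀ hp0.ne', Real.rpow_one]
  rw [← key]
  exact (Real.continuous_rpow_const (by positivity)).comp h.cont_pow

lemma cont_add (hp0 : 0 < p) : Continuous fun q : X × X => q.1 + q.2 := by
  have : LipschitzWith 2 fun q : X × X => q.1 + q.2 := by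
    apply LipschitzWith.of_dist_le_mul
    rintro ⟨x, y⟩ ⟨x', y'⟩
    have h1 : dist (x + y) (x' + y') ≤ dist x x' + dist y y' := by
      rw [h.dist_eq, h.dist_eq, h.dist_eq]
      have := h.tri (x - x') (y - y')
      have e : x - x' + (y - y') = x + y - (x' + y') := by abel
      rw [e] at this; exact this
    have h2 : dist x x' ≤ dist (x, y) (x', y') := le_max_left _ _
    have h3 : dist y y' ≤ dist (x, y) (x', y') := le_max_right _ _
    push_cast
    linarith
  exact this.continuous

lemma cont_smul (hp0 : 0 < p) (a : ℝ) : Continuous fun x : X => a • x := by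
  have : LipschitzWith (Real.toNNReal (|a| ^ p)) fun x : X => a • x := by
    apply LipschitzWith.of_dist_le_mul
    intro x y
    rw [h.dist_eq, h.dist_eq, Real.coe_toNNReal _ (by positivity)]
    have e : a • x - a • y = a • (x - y) := by rw [smul_sub]
    rw [e, h.hom, Real.mul_rpow (abs_nonneg a) (h.nonneg _)]
  exact this.continuous

lemma dense_span (hp0 : 0 < p) {Y : Set X} {β : ℝ} (hβ : 0 < β)
    (hpos : ∀ x : X, x ≠ 0 → 0 < N x)
    (hb : {x | N x ≤ 1} ⊆ β • closure (paconv p Y)) :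
    Dense ((Submodule.span ℝ Y : Submodule ℝ X) : Set X) := by
  intro x
  rcases eq_or_ne x 0 with rfl | hx
  · exact subset_closure (Submodule.zero_mem _)
  · set t := N x with ht
    have htpos : 0 < t := hpos x hx
    have hu : N (t⁻¹ • x) ≤ 1 := by
      rw [h.hom, abs_of_pos (inv_pos.2 htpos), inv_mul_cancel₀ htpos.ne']
    obtain ⟨z, hz, hzx⟩ := hb hu
    have hz' : z ∈ closure ((Submodule.span ℝ Y : Submodule ℝ X) : Set X) :=
      closure_mono (paconv_subset_span Y) hz
    have : x = (t * β) • z := by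
      have : x = t • (t⁻¹ • x) := by rw [smul_smul, mul_inv_cancel₀ htpos.ne', one_smul]
      rw [this, ← hzx, smul_smul]
    rw [this]
    have hmaps : ((t * β) • ·) '' ((Submodule.span ℝ Y : Submodule ℝ X) : Set X)
        ⊆ ((Submodule.span ℝ Y : Submodule ℝ X) : Set X) := by
      rintro _ ⟨w, hw, rfl⟩
      exact Submodule.smul_mem _ _ hw
    have step1 : (t * β) • z ∈ ((t * β) • ·) '' closure
        ((Submodule.span ℝ Y : Submodule ℝ X) : Set X) := Set.mem_image_of_mem _ hz'
    have step2 := image_closure_subset_closure_image (s := ((Submodule.span ℝ Y : Submodule ℝ X) : Set X)) (h.cont_smul hp0 (t * β)) step1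
    exact closure_mono hmaps step2

end PNormData


lemma oneSided {p : ℝ} (hp0 : 0 < p)
    {X₁ : Type*} [AddCommGroup X₁] [Module ℝ X₁] [MetricSpace X₁]
    {X₂ : Type*} [AddCommGroup X₂] [Module ℝ X₂] [MetricSpace X₂] [CompleteSpace X₂]
    {N₁ : X₁ → ℝ} {N₂ : X₂ → ℝ} (h₁ : PNormData p N₁) (h₂ : PNormData p N₂)
    (hpos₁ : ∀ x, x ≠ 0 → 0 < N₁ x)
    {Y₁ : Set X₁} {Y₂ : Set X₂} {β α' c₁ : ℝ} (hβ : 0 < β) (hα' : 0 < α') (hc₁ : 0 < c₁)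
    (hnorming₁b : {x | N₁ x ≤ 1} ⊆ β • closure (paconv p Y₁))
    (hnorming₂a : α' • closure (paconv p Y₂) ⊆ {x | N₂ x ≤ 1})
    (hnbhd₁ : {x | N₁ x ≤ c₁} ∩ (Submodule.span ℝ Y₁ : Set X₁) ⊆ paconv p Y₁)
    (T : Submodule.span ℝ Y₁ →ₗ[ℝ] X₂)
    (hTY : T '' (Subtype.val ⁻¹' Y₁) = Y₂) :
    ∃ Tt : X₁ →ₗ[ℝ] X₂, Continuous Tt ∧ (∀ m : Submodule.span ℝ Y₁, Tt m = T m) ∧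
      ∀ x, N₂ (Tt x) ≤ (β / α') * N₁ x := by
  -- elements of paconv Y₂ have small norm
  have hpavY₂ : ∀ z ∈ paconv p Y₂, N₂ z ≤ α'⁻¹ := by
    intro z hz
    have h1 : α' • z ∈ α' • closure (paconv p Y₂) :=
      Set.smul_mem_smul_set (subset_closure hz)
    have h2 := hnorming₂a h1
    rw [Set.mem_setOf_eq, h₂.hom, abs_of_pos hα'] at h2
    have := (le_div_iff₀' hα').2 h2
    rwa [one_div] at this
  -- T maps paconv Y₁ into paconv Y₂
  have hTpav : ∀ m : Submodule.span ℝ Y₁, (m : X₁) ∈ paconv p Y₁ → T m ∈ paconv p Y₂ := by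
    intro m hm
    set Z₁ : Set (Submodule.span ℝ Y₁) := Subtype.val ⁻¹' Y₁ with hZ₁
    have hY₁M : Y₁ ⊆ ((Submodule.span ℝ Y₁ : Submodule ℝ X₁) : Set X₁) := Submodule.subset_span
    have himg : (Subtype.val : Submodule.span ℝ Y₁ → X₁) '' Z₁ = Y₁ := by
      rw [hZ₁, Set.image_preimage_eq_inter_range, Subtype.range_coe]
      exact Set.inter_eq_left.2 hY₁M
    have key1 : ((Submodule.span ℝ Y₁).subtype) '' (paconv p Z₁) = paconv p Y₁ := by
      rw [image_paconv, Submodule.coe_subtype, himg]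
    have key2 : T '' (paconv p Z₁) = paconv p Y₂ := by
      rw [image_paconv, hZ₁, hTY]
    rw [← key1] at hm
    obtain ⟨m', hm', hmm⟩ := hm
    have hmm' : m' = m := Subtype.ext hmm
    rw [← key2]
    exact ⟨m, hmm' ▸ hm', rfl⟩
  have hN₂0 : N₂ 0 = 0 := h₂.zero
  have hN₁0 : N₁ 0 = 0 := h₁.zero
  -- crude bound, giving uniform continuity
  have hcrude : ∀ m : Submodule.span ℝ Y₁, N₂ (T m) ≤ (c₁⁻¹ * α'⁻¹) * N₁ (m : X₁) := by
    intro m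
    rcases eq_or_ne (m : X₁) 0 with hm0 | hm0
    · have hm0' : m = 0 := Subtype.ext hm0
      have hz : ((0 : Submodule.span ℝ Y₁) : X₁) = 0 := rfl
      rw [hm0', map_zero, hN₂0, hz, hN₁0, mul_zero]
    · set t := N₁ (m : X₁) with ht
      have htpos : 0 < t := hpos₁ _ hm0
      set m' : Submodule.span ℝ Y₁ := (c₁ * t⁻¹) • m with hm'
      have hcoe : (m' : X₁) = (c₁ * t⁻¹) • (m : X₁) := rfl
      have hNm' : N₁ (m' : X₁) ≤ c₁ := by
        rw [hcoe, h₁.hom, abs_of_pos (by positivity), ← ht,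
          mul_assoc, inv_mul_cancel₀ htpos.ne', mul_one]
      have hmem : (m' : X₁) ∈ paconv p Y₁ := hnbhd₁ ⟨hNm', m'.2⟩
      have h3 : N₂ (T m') ≤ α'⁻¹ := hpavY₂ _ (hTpav m' hmem)
      rw [hm', map_smul, h₂.hom, abs_of_pos (by positivity)] at h3
      have h4 : N₂ (T m) ≤ α'⁻¹ / (c₁ * t⁻¹) := (le_div_iff₀' (by positivity)).2 h3
      calc N₂ (T m) ≤ α'⁻¹ / (c₁ * t⁻¹) := h4
        _ = (c₁⁻¹ * α'⁻¹) * t := by rw [div_eq_mul_inv, mul_inv, inv_inv]; ring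
  set K : ℝ := c₁⁻¹ * α'⁻¹ with hK
  have hKpos : 0 < K := by positivity
  have hTdiff : ∀ m m' : Submodule.span ℝ Y₁, N₂ (T m - T m') ≤ K * N₁ ((m : X₁) - (m' : X₁)) := by
    intro m m'
    have : T m - T m' = T (m - m') := by rw [map_sub]
    rw [this]
    have := hcrude (m - m')
    simpa using this
  have hTuc : UniformContinuous fun m : Submodule.span ℝ Y₁ => T m := by
    have : LipschitzWith (Real.toNNReal (K ^ p)) fun m : Submodule.span ℝ Y₁ => T m := by
      apply LipschitzWith.of_dist_le_mul
      intro m m'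
      rw [h₂.dist_eq, Real.coe_toNNReal _ (by positivity), Subtype.dist_eq, h₁.dist_eq]
      calc N₂ (T m - T m') ^ p ≤ (K * N₁ ((m : X₁) - (m' : X₁))) ^ p :=
            Real.rpow_le_rpow (h₂.nonneg _) (hTdiff m m') hp0.le
        _ = K ^ p * N₁ ((m : X₁) - (m' : X₁)) ^ p :=
            Real.mul_rpow hKpos.le (h₁.nonneg _)
    exact this.uniformContinuous
  -- extension
  have ue : IsUniformInducing (Subtype.val : Submodule.span ℝ Y₁ → X₁) :=
    isUniformEmbedding_subtype_val.isUniformInducing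
  have hdense : Dense ((Submodule.span ℝ Y₁ : Submodule ℝ X₁) : Set X₁) := h₁.dense_span hp0 hβ hpos₁ hnorming₁b
  have hd : DenseRange (Subtype.val : Submodule.span ℝ Y₁ → X₁) := by
    rw [DenseRange, Subtype.range_coe]; exact hdense
  set Φ : X₁ → X₂ := (ue.isDenseInducing hd).extend (fun m : Submodule.span ℝ Y₁ => T m) with hΦ
  have contΦ : Continuous Φ := (uniformContinuous_uniformly_extend ue hd hTuc).continuous
  have hΦT : ∀ m : Submodule.span ℝ Y₁, Φ (m : X₁) = T m := fun m => uniformly_extend_of_ind ue hd hTuc m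
  -- additivity
  have hadd : ∀ x y : X₁, Φ (x + y) = Φ x + Φ y := by
    have hc1 : Continuous fun q : X₁ × X₁ => Φ (q.1 + q.2) :=
      contΦ.comp (h₁.cont_add hp0)
    have hc2 : Continuous fun q : X₁ × X₁ => Φ q.1 + Φ q.2 :=
      (h₂.cont_add hp0).comp ((contΦ.comp continuous_fst).prodMk (contΦ.comp continuous_snd))
    have heq : (fun q : X₁ × X₁ => Φ (q.1 + q.2)) = fun q => Φ q.1 + Φ q.2 := by
      apply hc1.ext_on ((hdense.prod hdense)) hc2
      rintro ⟨x, y⟩ ⟨hx, hy⟩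
      have hx' : x ∈ Submodule.span ℝ Y₁ := hx
      have hy' : y ∈ Submodule.span ℝ Y₁ := hy
      have : x + y = ((⟨x, hx'⟩ + ⟨y, hy'⟩ : Submodule.span ℝ Y₁) : X₁) := rfl
      simp only []
      rw [this, hΦT, map_add, ← hΦT ⟨x, hx'⟩, ← hΦT ⟨y, hy'⟩]
    intro x y
    exact congrFun heq (x, y)
  have hsmul : ∀ (a : ℝ) (x : X₁), Φ (a • x) = a • Φ x := by
    intro a
    have hc1 : Continuous fun x : X₁ => Φ (a • x) := contΦ.comp (h₁.cont_smul hp0 a)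
    have hc2 : Continuous fun x : X₁ => a • Φ x := (h₂.cont_smul hp0 a).comp contΦ
    have heq : (fun x : X₁ => Φ (a • x)) = fun x => a • Φ x := by
      apply hc1.ext_on hdense hc2
      intro x hx
      have hx' : x ∈ Submodule.span ℝ Y₁ := hx
      have : a • x = ((a • (⟨x, hx'⟩ : Submodule.span ℝ Y₁) : Submodule.span ℝ Y₁) : X₁) := rfl
      simp only []
      rw [this, hΦT, map_smul, ← hΦT ⟨x, hx'⟩]
    intro x; exact congrFun heq x
  set Tt : X₁ →ₗ[ℝ] X₂ :=
    { toFun := Φ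
      map_add' := hadd
      map_smul' := hsmul } with hTt
  have hTtΦ : ∀ x, Tt x = Φ x := fun x => rfl
  -- refined bound
  have hcl : ∀ z ∈ closure (paconv p Y₁), N₂ (Φ z) ^ p ≤ α'⁻¹ ^ p := by
    intro z hz
    have hsub : paconv p Y₁ ⊆ {z | N₂ (Φ z) ^ p ≤ α'⁻¹ ^ p} := by
      intro w hw
      have hwM : w ∈ Submodule.span ℝ Y₁ := paconv_subset_span Y₁ hw
      have : Φ w = T ⟨w, hwM⟩ := hΦT ⟨w, hwM⟩
      rw [Set.mem_setOf_eq, this]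
      exact Real.rpow_le_rpow (h₂.nonneg _) (hpavY₂ _ (hTpav ⟨w, hwM⟩ hw)) hp0.le
    have hclosed : IsClosed {z | N₂ (Φ z) ^ p ≤ α'⁻¹ ^ p} :=
      isClosed_le (h₂.cont_pow.comp contΦ) continuous_const
    exact closure_minimal hsub hclosed hz
  have hball : ∀ x, N₁ x ≤ 1 → N₂ (Φ x) ≤ β * α'⁻¹ := by
    intro x hx
    obtain ⟨z, hz, hzx⟩ := hnorming₁b hx
    have h5 : N₂ (Φ z) ≤ α'⁻¹ :=
      (Real.rpow_le_rpow_iff (h₂.nonneg _) (by positivity) hp0).1 (hcl z hz)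
    have h6 : Φ x = β • Φ z := by rw [← hzx, hsmul]
    rw [h6, h₂.hom, abs_of_pos hβ]
    exact mul_le_mul_of_nonneg_left h5 hβ.le
  refine ⟨Tt, ?_, ?_, ?_⟩
  · exact contΦ
  · intro m; exact hΦT m
  intro x
  rcases eq_or_ne x 0 with rfl | hx
  · rw [hTtΦ, hN₁0, mul_zero]
    have : Φ 0 = 0 := by rw [← hTtΦ, map_zero]
    rw [this, hN₂0]
  · set t := N₁ x with ht
    have htpos : 0 < t := hpos₁ x hx
    have hu : N₁ (t⁻¹ • x) ≤ 1 := by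
      rw [h₁.hom, abs_of_pos (inv_pos.2 htpos), inv_mul_cancel₀ htpos.ne']
    have h7 := hball _ hu
    rw [hsmul, h₂.hom, abs_of_pos (inv_pos.2 htpos)] at h7
    have h8 : N₂ (Φ x) ≤ (β * α'⁻¹) / t⁻¹ := (le_div_iff₀' (inv_pos.2 htpos)).2 h7
    rw [hTtΦ]
    calc N₂ (Φ x) ≤ (β * α'⁻¹) / t⁻¹ := h8
      _ = (β / α') * t := by rw [div_eq_mul_inv, inv_inv, div_eq_mul_inv]

/-- Extension lemma for p-norming sets: a linear bijection between p-norming sets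
whose p-convex hulls contain neighborhoods of zero in the respective spans extends
to an onto isomorphism, with norm bounds β/α' and β'/α. -/
theorem stmt18 (p : ℝ) (hp0 : 0 < p) (hp1 : p ≤ 1)
    (X₁ X₂ : Type*)
    [AddCommGroup X₁] [Module ℝ X₁] [MetricSpace X₁] [CompleteSpace X₁]
    [AddCommGroup X₂] [Module ℝ X₂] [MetricSpace X₂] [CompleteSpace X₂]
    (N₁ : X₁ → ℝ) (N₂ : X₂ → ℝ)
    (hnonneg₁ : ∀ x, 0 ≤ N₁ x) (hpos₁ : ∀ x, x ≠ 0 → 0 < N₁ x)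
    (hhom₁ : ∀ (a : ℝ) (x : X₁), N₁ (a • x) = |a| * N₁ x)
    (htri₁ : ∀ x y, N₁ (x + y) ^ p ≤ N₁ x ^ p + N₁ y ^ p)
    (hdist₁ : ∀ x y, dist x y = N₁ (x - y) ^ p)
    (hnonneg₂ : ∀ x, 0 ≤ N₂ x) (hpos₂ : ∀ x, x ≠ 0 → 0 < N₂ x)
    (hhom₂ : ∀ (a : ℝ) (x : X₂), N₂ (a • x) = |a| * N₂ x)
    (htri₂ : ∀ x y, N₂ (x + y) ^ p ≤ N₂ x ^ p + N₂ y ^ p)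
    (hdist₂ : ∀ x y, dist x y = N₂ (x - y) ^ p)
    (Y₁ : Set X₁) (Y₂ : Set X₂) (α β α' β' c₁ c₂ : ℝ)
    (hα : 0 < α) (hβ : 0 < β) (hα' : 0 < α') (hβ' : 0 < β')
    (hc₁ : 0 < c₁) (hc₂ : 0 < c₂)
    (hnorming₁a : α • closure (paconv p Y₁) ⊆ {x | N₁ x ≤ 1})
    (hnorming₁b : {x | N₁ x ≤ 1} ⊆ β • closure (paconv p Y₁))
    (hnorming₂a : α' • closure (paconv p Y₂) ⊆ {x | N₂ x ≤ 1})
    (hnorming₂b : {x | N₂ x ≤ 1} ⊆ β' • closure (paconv p Y₂))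
    (hnbhd₁ : {x | N₁ x ≤ c₁} ∩ (Submodule.span ℝ Y₁ : Set X₁) ⊆ paconv p Y₁)
    (hnbhd₂ : {x | N₂ x ≤ c₂} ∩ (Submodule.span ℝ Y₂ : Set X₂) ⊆ paconv p Y₂)
    (T : Submodule.span ℝ Y₁ →ₗ[ℝ] X₂) (hTinj : Function.Injective T)
    (hTY : T '' (Subtype.val ⁻¹' Y₁) = Y₂) :
    ∃ Tt : X₁ →ₗ[ℝ] X₂,
      (∀ y : Submodule.span ℝ Y₁, Tt y = T y) ∧
      Function.Bijective Tt ∧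
      (∀ x, N₂ (Tt x) ≤ (β / α') * N₁ x) ∧
      (∀ x, N₁ x ≤ (β' / α) * N₂ (Tt x)) := by
  have h₁ : PNormData p N₁ := ⟨hnonneg₁, hhom₁, htri₁, hdist₁⟩
  have h₂ : PNormData p N₂ := ⟨hnonneg₂, hhom₂, htri₂, hdist₂⟩
  -- forward extension
  obtain ⟨Tt, contTt, hTtT, hTtbound⟩ :=
    oneSided hp0 h₁ h₂ hpos₁ hβ hα' hc₁ hnorming₁b hnorming₂a hnbhd₁ T hTY
  -- range of T is span Y₂
  have hrange : LinearMap.range T = Submodule.span ℝ Y₂ := by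
    rw [LinearMap.range_eq_map, ← Submodule.span_span_coe_preimage (R := ℝ) (s := Y₁),
      Submodule.map_span, hTY]
  -- the induced equivalence
  set e : (Submodule.span ℝ Y₁ : Submodule ℝ X₁) ≃ₗ[ℝ] (Submodule.span ℝ Y₂ : Submodule ℝ X₂) :=
    (LinearEquiv.ofInjective T hTinj).trans (LinearEquiv.ofEq _ _ hrange) with he_def
  have he : ∀ m : Submodule.span ℝ Y₁, ((e m : Submodule.span ℝ Y₂) : X₂) = T m := by
    intro m
    simp [he_def, LinearEquiv.ofInjective_apply]
  -- the inverse map S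
  set S : (Submodule.span ℝ Y₂ : Submodule ℝ X₂) →ₗ[ℝ] X₁ :=
    (Submodule.span ℝ Y₁).subtype.comp (e.symm : _ →ₗ[ℝ] _) with hS_def
  have hSapp : ∀ y : Submodule.span ℝ Y₂, S y = ((e.symm y : Submodule.span ℝ Y₁) : X₁) :=
    fun y => rfl
  have hSY : S '' (Subtype.val ⁻¹' Y₂) = Y₁ := by
    ext x
    constructor
    · rintro ⟨y, hy, rfl⟩
      have hy' : (y : X₂) ∈ T '' (Subtype.val ⁻¹' Y₁) := by rw [hTY]; exact hy
      obtain ⟨m, hm, hmy⟩ := hy'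
      have h1 : e m = y := Subtype.ext (by rw [he, hmy])
      have h2 : e.symm y = m := by rw [← h1, LinearEquiv.symm_apply_apply]
      rw [hSapp, h2]
      exact hm
    · intro hx
      have hxM : x ∈ Submodule.span ℝ Y₁ := Submodule.subset_span hx
      set m : Submodule.span ℝ Y₁ := ⟨x, hxM⟩ with hm_def
      refine ⟨e m, ?_, ?_⟩
      · show ((e m : Submodule.span ℝ Y₂) : X₂) ∈ Y₂
        rw [he, ← hTY]
        exact ⟨m, hx, rfl⟩
      · rw [hSapp, LinearEquiv.symm_apply_apply]
  -- backward extension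
  obtain ⟨St, contSt, hStS, hStbound⟩ :=
    oneSided hp0 h₂ h₁ hpos₂ hβ' hα hc₂ hnorming₂b hnorming₁a hnbhd₂ S hSY
  -- dense ranges
  have hdense₁ : Dense ((Submodule.span ℝ Y₁ : Submodule ℝ X₁) : Set X₁) :=
    h₁.dense_span hp0 hβ hpos₁ hnorming₁b
  have hdense₂ : Dense ((Submodule.span ℝ Y₂ : Submodule ℝ X₂) : Set X₂) :=
    h₂.dense_span hp0 hβ' hpos₂ hnorming₂b
  -- St ∘ Tt = id
  have hST : ∀ x : X₁, St (Tt x) = x := by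
    have hc1 : Continuous fun x : X₁ => St (Tt x) := contSt.comp contTt
    have heq : (fun x : X₁ => St (Tt x)) = fun x => x := by
      apply hc1.ext_on hdense₁ continuous_id
      intro x hx
      have hxM : x ∈ Submodule.span ℝ Y₁ := hx
      set m : Submodule.span ℝ Y₁ := ⟨x, hxM⟩ with hm_def
      have h1 : Tt x = T m := hTtT m
      have h2 : T m = ((e m : Submodule.span ℝ Y₂) : X₂) := (he m).symm
      simp only []
      rw [h1, h2, hStS (e m), hSapp, LinearEquiv.symm_apply_apply]
      rfl
    intro x; exact congrFun heq x
  have hTS : ∀ y : X₂, Tt (St y) = y := by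
    have hc1 : Continuous fun y : X₂ => Tt (St y) := contTt.comp contSt
    have heq : (fun y : X₂ => Tt (St y)) = fun y => y := by
      apply hc1.ext_on hdense₂ continuous_id
      intro y hy
      have hyM : y ∈ Submodule.span ℝ Y₂ := hy
      set m : Submodule.span ℝ Y₂ := ⟨y, hyM⟩ with hm_def
      have h1 : St y = S m := hStS m
      simp only []
      rw [h1, hSapp, hTtT (e.symm m), ← he (e.symm m), LinearEquiv.apply_symm_apply]
      rfl
    intro y; exact congrFun heq y
  refine ⟨Tt, hTtT, ⟨?_, ?_⟩, hTtbound, ?_⟩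
  · intro a b hab
    have := congrArg St hab
    rwa [hST, hST] at this
  · intro y
    exact ⟨St y, hTS y⟩
  · intro x
    calc N₁ x = N₁ (St (Tt x)) := by rw [hST]
      _ ≤ (β' / α) * N₂ (Tt x) := hStbound (Tt x)
end

section
/- Let 0 < p ≤ 1, let X be a p-Banach space, M a closed subspace, T : X → X/M the quotient map, V a dense linear subspace of X with V ∩ M = {0}, and K = B_X ∩ V. Then K is absolutely p-convex, K is isometrically p-norming in X (closure of K equals B_X, equivalently B_X = closure(aconv_p K)), and the closed unit ball of X/M satisfies B_{X/M} ⊆ closure(T(K)). In particular, if M ≠ {0}, T restricted to span K = V is injective with T(K) p-norming in X/M, yet T does not extend to an isomorphism of X onto X/M. -/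
/-- Counterexample setting: X a p-Banach space, M a closed subspace, V a dense
subspace with V ∩ M = {0}, K = B_X ∩ V, and T : X → X/M the quotient map (carrying
the quotient p-norm qN). Then K is absolutely p-convex and isometrically p-norming
in X, the unit ball of X/M is contained in the closure of T(K); yet if M ≠ {0},
T is injective on V = span K with T(K) computing the quotient ball, but T does not
extend to an isomorphism of X onto X/M. -/
theorem stmt19 (p : ℝ) (hp0 : 0 < p) (hp1 : p ≤ 1)
    (X : Type*) [AddCommGroup X] [Module ℝ X] [MetricSpace X] [CompleteSpace X]
    (N : X → ℝ)
    (hnonneg : ∀ x, 0 ≤ N x) (hpos : ∀ x, x ≠ 0 → 0 < N x)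
    (hhom : ∀ (a : ℝ) (x : X), N (a • x) = |a| * N x)
    (htri : ∀ x y, N (x + y) ^ p ≤ N x ^ p + N y ^ p)
    (hdist : ∀ x y, dist x y = N (x - y) ^ p)
    (M : Submodule ℝ X) (hM : IsClosed (M : Set X))
    (V : Submodule ℝ X) (hV : Dense (V : Set X)) (hVM : V ⊓ M = ⊥)
    (qN : (X ⧸ M) → ℝ)
    (hqN : ∀ z, qN z = sInf {r | ∃ x : X, (Submodule.Quotient.mk x : X ⧸ M) = z ∧ r = N x}) :
    -- K = B_X ∩ V is absolutely p-convex
    (∀ x ∈ {x | N x ≤ 1} ∩ (V : Set X), ∀ y ∈ {x | N x ≤ 1} ∩ (V : Set X),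
      ∀ a b : ℝ, |a| ^ p + |b| ^ p ≤ 1 →
        a • x + b • y ∈ {x | N x ≤ 1} ∩ (V : Set X)) ∧
    -- K is isometrically p-norming in X
    {x | N x ≤ 1} = closure (paconv p ({x | N x ≤ 1} ∩ (V : Set X))) ∧
    -- B_{X/M} is contained in the closure of T(K)
    (∀ z : X ⧸ M, qN z ≤ 1 → ∀ ε > 0, ∃ k ∈ {x | N x ≤ 1} ∩ (V : Set X),
      qN (z - Submodule.Quotient.mk k) < ε) ∧
    (M ≠ ⊥ →
      -- the quotient map is injective on V = span K
      (∀ v ∈ V, ∀ v' ∈ V,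
        (Submodule.Quotient.mk v : X ⧸ M) = Submodule.Quotient.mk v' → v = v') ∧
      -- yet it does not extend to an onto isomorphism X → X/M
      ¬ ∃ S : X →ₗ[ℝ] X ⧸ M,
          (∀ v ∈ V, S v = Submodule.Quotient.mk v) ∧ Function.Bijective S ∧
          ∃ C > 0, (∀ x, qN (S x) ≤ C * N x) ∧ (∀ x, N x ≤ C * qN (S x))) := by
    classical
  set K : Set X := {x | N x ≤ 1} ∩ (V : Set X) with hKdef
  -- basic norm facts
  have hN0 : N (0:X) = 0 := by simpa using hhom 0 0
  have hNneg : ∀ x : X, N (-x) = N x := fun x => by simpa using hhom (-1) x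
  have hplo : ∀ x : X, N x ^ p ≤ 1 ↔ N x ≤ 1 := by
    intro x
    constructor
    · intro h
      by_contra hc
      push_neg at hc
      have h1 : 1 < N x ^ p := by
        rw [Real.one_lt_rpow_iff_of_pos (lt_trans one_pos hc)]
        exact Or.inl ⟨hc, hp0⟩
      linarith
    · intro h; exact Real.rpow_le_one (hnonneg x) h hp0.le
  have hball : {x : X | N x ≤ 1} = Metric.closedBall 0 1 := by
    ext x
    simp only [Set.mem_setOf_eq, Metric.mem_closedBall, hdist, sub_zero]
    exact (hplo x).symm
  have hclosed : IsClosed {x : X | N x ≤ 1} := by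
    rw [hball]; exact Metric.isClosed_closedBall
  -- absolute p-convexity of the ball
  have habs : ∀ x y : X, N x ≤ 1 → N y ≤ 1 → ∀ a b : ℝ, |a| ^ p + |b| ^ p ≤ 1 →
      N (a • x + b • y) ≤ 1 := by
    intro x y hx hy a b hab
    rw [← hplo]
    have h1 : N (a • x + b • y) ^ p ≤ N (a • x) ^ p + N (b • y) ^ p := htri _ _
    have h2 : N (a • x) ^ p = |a| ^ p * N x ^ p := by
      rw [hhom, Real.mul_rpow (abs_nonneg _) (hnonneg _)]
    have h3 : N (b • y) ^ p = |b| ^ p * N y ^ p := by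
      rw [hhom, Real.mul_rpow (abs_nonneg _) (hnonneg _)]
    have h4 : N x ^ p ≤ 1 := (hplo x).mpr hx
    have h5 : N y ^ p ≤ 1 := (hplo y).mpr hy
    have h6 : |a| ^ p * N x ^ p ≤ |a| ^ p * 1 := by
      have := Real.rpow_nonneg (abs_nonneg a) p
      nlinarith [Real.rpow_nonneg (hnonneg x) p]
    have h7 : |b| ^ p * N y ^ p ≤ |b| ^ p * 1 := by
      have := Real.rpow_nonneg (abs_nonneg b) p
      nlinarith [Real.rpow_nonneg (hnonneg y) p]
    nlinarith
  -- part 1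
  have part1 : ∀ x ∈ K, ∀ y ∈ K, ∀ a b : ℝ, |a| ^ p + |b| ^ p ≤ 1 →
      a • x + b • y ∈ K := by
    rintro x ⟨hx1, hx2⟩ y ⟨hy1, hy2⟩ a b hab
    exact ⟨habs x y hx1 hy1 a b hab, V.add_mem (V.smul_mem a hx2) (V.smul_mem b hy2)⟩
  -- density key lemma
  have hkey : ∀ x : X, N x ≤ 1 → ∀ η : ℝ, 0 < η → ∃ v ∈ K, N (x - v) ^ p < η := by
    intro x hx η hη
    set δ : ℝ := min (1/2) ((η/2) ^ p⁻¹ / 2) with hδdef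
    have hδpos : 0 < δ := lt_min (by norm_num) (by positivity)
    have hδ1 : δ < 1 := lt_of_le_of_lt (min_le_left _ _) (by norm_num)
    have hδp : δ ^ p < η / 2 := by
      have hlt : δ < (η/2) ^ p⁻¹ := by
        have h0 : (0:ℝ) < (η/2) ^ p⁻¹ := Real.rpow_pos_of_pos (by linarith) _
        exact lt_of_le_of_lt (min_le_right _ _) (by linarith)
      calc δ ^ p < ((η/2) ^ p⁻¹) ^ p := Real.rpow_lt_rpow hδpos.le hlt hp0
        _ = η/2 := Real.rpow_inv_rpow (by linarith) hp0.ne'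
    set y := (1 - δ) • x with hy
    have hNy : N y = (1-δ) * N x := by
      rw [hy, hhom, abs_of_pos (by linarith)]
    have hNyp : N y ^ p ≤ (1-δ) ^ p := by
      apply Real.rpow_le_rpow (hnonneg _) _ hp0.le
      rw [hNy]
      nlinarith [hnonneg x]
    have hlt1 : (1-δ:ℝ) ^ p < 1 := Real.rpow_lt_one (by linarith) (by linarith) hp0
    have hε₂ : 0 < min (η/2) (1 - (1-δ)^p) := lt_min (by linarith) (by linarith)
    obtain ⟨v, hvV, hvd⟩ := hV.exists_dist_lt y hε₂
    have hdv : N (y - v) ^ p < min (η/2) (1 - (1-δ)^p) := by rw [← hdist]; exact hvd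
    have hvv : N (v - y) ^ p < min (η/2) (1 - (1-δ)^p) := by
      rw [← neg_sub y v, hNneg]; exact hdv
    have hNv : N v ≤ 1 := by
      rw [← hplo]
      have h1 : N v ^ p ≤ N y ^ p + N (v - y) ^ p := by
        have := htri y (v - y)
        rwa [add_sub_cancel] at this
      have h2 : N (v - y) ^ p ≤ 1 - (1-δ)^p :=
        le_of_lt (lt_of_lt_of_le hvv (min_le_right _ _))
      linarith
    refine ⟨v, ⟨hNv, hvV⟩, ?_⟩
    have h3 : N (x - v) ^ p ≤ N (x - y) ^ p + N (y - v) ^ p := by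
      have := htri (x - y) (y - v)
      rwa [sub_add_sub_cancel] at this
    have hxy : N (x - y) ≤ δ := by
      have hxy' : x - y = δ • x := by
        rw [hy, sub_smul, one_smul]; abel
      rw [hxy', hhom, abs_of_pos hδpos]
      nlinarith [hnonneg x]
    have h4 : N (x - y) ^ p ≤ δ ^ p := Real.rpow_le_rpow (hnonneg _) hxy hp0.le
    have h5 : N (y - v) ^ p < η/2 := lt_of_lt_of_le hdv (min_le_left _ _)
    linarith
  -- part 2
  have hKsub : K ⊆ paconv p K := by
    intro x hx
    intro A hA
    exact hA.1 hx
  have hpsub : paconv p K ⊆ {x : X | N x ≤ 1} := by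
    apply Set.sInter_subset_of_mem
    refine ⟨Set.inter_subset_left, ?_⟩
    rintro x hx y hy a b hab
    exact habs x y hx hy a b hab
  have part2 : {x : X | N x ≤ 1} = closure (paconv p K) := by
    apply Set.Subset.antisymm
    · intro x hx
      have hxcl : x ∈ closure K := by
        rw [Metric.mem_closure_iff]
        intro ε hε
        obtain ⟨v, hv, h⟩ := hkey x hx ε hε
        exact ⟨v, hv, by rw [hdist]; exact h⟩
      exact closure_mono hKsub hxcl
    · exact closure_minimal hpsub hclosed
  -- quotient norm facts
  have hSne : ∀ z : X ⧸ M,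
      {r | ∃ x : X, (Submodule.Quotient.mk x : X ⧸ M) = z ∧ r = N x}.Nonempty := by
    intro z
    obtain ⟨x, rfl⟩ := Submodule.Quotient.mk_surjective M z
    exact ⟨N x, x, rfl, rfl⟩
  have hSbdd : ∀ z : X ⧸ M,
      BddBelow {r | ∃ x : X, (Submodule.Quotient.mk x : X ⧸ M) = z ∧ r = N x} := by
    intro z
    refine ⟨0, ?_⟩
    rintro r ⟨x, -, rfl⟩
    exact hnonneg x
  have hqle : ∀ x : X, qN (Submodule.Quotient.mk x) ≤ N x := by
    intro x
    rw [hqN]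
    exact csInf_le (hSbdd _) ⟨x, rfl, rfl⟩
  have hqnn : ∀ z : X ⧸ M, 0 ≤ qN z := by
    intro z
    rw [hqN]
    apply le_csInf (hSne z)
    rintro r ⟨x, -, rfl⟩
    exact hnonneg x
  have hqlt : ∀ (z : X ⧸ M) (s : ℝ), qN z < s →
      ∃ x : X, (Submodule.Quotient.mk x : X ⧸ M) = z ∧ N x < s := by
    intro z s h
    rw [hqN] at h
    obtain ⟨r, ⟨x, hx, rfl⟩, hr⟩ := (csInf_lt_iff (hSbdd z) (hSne z)).mp h
    exact ⟨x, hx, hr⟩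
  have part3 : ∀ z : X ⧸ M, qN z ≤ 1 → ∀ ε > 0, ∃ k ∈ K,
      qN (z - Submodule.Quotient.mk k) < ε := by
    intro z hz ε hε
    have hεp : (0:ℝ) < ε ^ p := Real.rpow_pos_of_pos hε _
    set δ : ℝ := (ε ^ p / 2) ^ p⁻¹ with hδdef
    have hδpos : 0 < δ := Real.rpow_pos_of_pos (by linarith) _
    have hδp : δ ^ p = ε ^ p / 2 := Real.rpow_inv_rpow (by linarith) hp0.ne'
    obtain ⟨x, hxz, hr⟩ := hqlt z (1 + δ) (lt_of_le_of_lt hz (by linarith))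
    set t : ℝ := max 1 (N x) with ht
    have ht1 : 1 ≤ t := le_max_left _ _
    have hNxt : N x ≤ t := le_max_right _ _
    have htpos : 0 < t := lt_of_lt_of_le one_pos ht1
    have htinv : t⁻¹ ≤ 1 := by
      rw [inv_le_one_iff₀]; right; exact ht1
    set y := t⁻¹ • x with hy
    have hNy : N y ≤ 1 := by
      rw [hy, hhom, abs_of_pos (inv_pos.mpr htpos)]
      calc t⁻¹ * N x ≤ t⁻¹ * t := by
            have := inv_pos.mpr htpos
            nlinarith
        _ = 1 := inv_mul_cancel₀ htpos.ne'
    have hxy : N (x - y) ≤ t - 1 := by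
      have hxy' : x - y = (1 - t⁻¹) • x := by
        rw [hy, sub_smul, one_smul]
      rw [hxy', hhom, abs_of_nonneg (by linarith)]
      calc (1 - t⁻¹) * N x ≤ (1 - t⁻¹) * t := by nlinarith [hnonneg x]
        _ = t - 1 := by field_simp
    have htlt : t - 1 < δ := by
      have : t < 1 + δ := max_lt (by linarith) hr
      linarith
    have h1 : N (x - y) ^ p < ε ^ p / 2 := by
      calc N (x - y) ^ p ≤ (t-1) ^ p := Real.rpow_le_rpow (hnonneg _) hxy hp0.le
        _ < δ ^ p := Real.rpow_lt_rpow (by linarith) htlt hp0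
        _ = ε ^ p / 2 := hδp
    obtain ⟨v, hvK, h2⟩ := hkey y hNy (ε ^ p / 2) (by linarith)
    refine ⟨v, hvK, ?_⟩
    have h3 : N (x - v) ^ p ≤ N (x - y) ^ p + N (y - v) ^ p := by
      have := htri (x - y) (y - v)
      rwa [sub_add_sub_cancel] at this
    have h4 : N (x - v) ^ p < ε ^ p := by linarith
    have h5 : N (x - v) < ε := by
      by_contra hc
      push_neg at hc
      exact absurd h4 (not_lt.mpr (Real.rpow_le_rpow hε.le hc hp0.le))
    have hmk : (Submodule.Quotient.mk (x - v) : X ⧸ M) = z - Submodule.Quotient.mk v := by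
      rw [Submodule.Quotient.mk_sub, hxz]
    have hq : qN (z - Submodule.Quotient.mk v) ≤ N (x - v) := by
      rw [hqN]
      exact csInf_le (hSbdd _) ⟨x - v, hmk, rfl⟩
    exact lt_of_le_of_lt hq h5
  refine ⟨part1, part2, part3, ?_⟩
  intro hMne
  constructor
  · intro v hv v' hv' h
    have hsub : v - v' ∈ M := (Submodule.Quotient.eq M).mp h
    have h2 : v - v' ∈ V ⊓ M := ⟨V.sub_mem hv hv', hsub⟩
    rw [hVM] at h2
    have h3 : v - v' = 0 := h2
    exact sub_eq_zero.mp h3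
  · rintro ⟨S, hSV, hSbij, C, hC, hub, hlb⟩
    obtain ⟨m, hmM, hm0⟩ := (Submodule.ne_bot_iff M).mp hMne
    have hq0 : ∀ ε : ℝ, 0 < ε → qN (S m) ^ p ≤ ε := by
      intro ε hε
      set r : ℝ := (ε/2) ^ p⁻¹ with hrdef
      have hrpos : 0 < r := Real.rpow_pos_of_pos (by linarith) _
      have hrp : r ^ p = ε/2 := Real.rpow_inv_rpow (by linarith) hp0.ne'
      have hminpos : 0 < min (r/2) (r/(2*C)) := lt_min (by linarith) (by positivity)
      have hγpos : 0 < (min (r/2) (r/(2*C))) ^ p := Real.rpow_pos_of_pos hminpos _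
      obtain ⟨v, hvV, hvd⟩ := hV.exists_dist_lt m hγpos
      have hmv : N (m - v) ^ p < (min (r/2) (r/(2*C))) ^ p := by
        rw [← hdist]; exact hvd
      have hmv' : N (m - v) < min (r/2) (r/(2*C)) := by
        by_contra hc
        push_neg at hc
        exact absurd hmv (not_lt.mpr (Real.rpow_le_rpow hminpos.le hc hp0.le))
      have h1 : N (m - v) < r/2 := lt_of_lt_of_le hmv' (min_le_left _ _)
      have h2 : C * N (m - v) < r := by
        have h2' : N (m - v) < r/(2*C) := lt_of_lt_of_le hmv' (min_le_right _ _)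
        have : C * N (m - v) < C * (r/(2*C)) := by
          exact mul_lt_mul_of_pos_left h2' hC
        have heq : C * (r/(2*C)) = r/2 := by field_simp
        linarith
      have hmkv : (Submodule.Quotient.mk (v - m) : X ⧸ M) = Submodule.Quotient.mk v := by
        rw [Submodule.Quotient.mk_sub, (Submodule.Quotient.mk_eq_zero M).mpr hmM, sub_zero]
      have hq1 : qN (Submodule.Quotient.mk v : X ⧸ M) < r := by
        have hle : qN (Submodule.Quotient.mk v : X ⧸ M) ≤ N (v - m) := by
          rw [hqN]
          exact csInf_le (hSbdd _) ⟨v - m, hmkv, rfl⟩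
        have hvm : N (v - m) = N (m - v) := by rw [← neg_sub m v, hNneg]
        linarith
      have hq2 : qN (S (m - v)) < r := lt_of_le_of_lt (hub (m - v)) h2
      obtain ⟨x1, hx1, hN1⟩ := hqlt _ _ hq1
      obtain ⟨x2, hx2, hN2⟩ := hqlt _ _ hq2
      have hSm : S m = Submodule.Quotient.mk (x1 + x2) := by
        have hdec : S m = Submodule.Quotient.mk v + S (m - v) := by
          rw [← hSV v hvV, ← map_add]
          congr 1
          abel
        rw [hdec, Submodule.Quotient.mk_add, hx1, hx2]
      have hle : qN (S m) ≤ N (x1 + x2) := by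
        rw [hqN]
        exact csInf_le (hSbdd _) ⟨x1 + x2, hSm.symm, rfl⟩
      have hA : qN (S m) ^ p ≤ N (x1 + x2) ^ p :=
        Real.rpow_le_rpow (hqnn _) hle hp0.le
      have hB : N (x1 + x2) ^ p ≤ N x1 ^ p + N x2 ^ p := htri _ _
      have hC1 : N x1 ^ p ≤ r ^ p := Real.rpow_le_rpow (hnonneg _) hN1.le hp0.le
      have hC2 : N x2 ^ p ≤ r ^ p := Real.rpow_le_rpow (hnonneg _) hN2.le hp0.le
      linarith
    have hq0' : qN (S m) = 0 := by
      have hnn : 0 ≤ qN (S m) := hqnn _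
      have hple : qN (S m) ^ p ≤ 0 := by
        by_contra hc
        push_neg at hc
        have := hq0 (qN (S m) ^ p / 2) (by linarith)
        linarith
      have : qN (S m) ^ p = 0 := le_antisymm hple (Real.rpow_nonneg hnn p)
      exact (Real.rpow_eq_zero hnn hp0.ne').mp this
    have hfin := hlb m
    rw [hq0', mul_zero] at hfin
    exact absurd hfin (not_le.mpr (hpos m hm0))
end
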